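/- arXiv:1109.1778 — 11 statements merged into one kernel-verified Lean document; each statement's English description precedes it below -/
import Mathlib

section
/- For invertible self-adjoint bounded operators S and T on a complex Hilbert space and any bounded operator X, ‖S X T⁻¹ + S⁻¹ X T‖ ≥ 2‖X‖. -/
/-!
Put `Z = S⁻¹ X T⁻¹`; the claim becomes `2 ‖S Z T‖ ≤ ‖S² Z + Z T²‖`, which holds for all
self-adjoint `S`, `T`. With `a t = e^{-tS²} S u` and `b t = e^{-tT²} T v`, the function
`⟪a t, Z (b t)⟫` has derivative `-⟪a t, (S² Z + Z T²) (b t)⟫`, while `‖e^{-tS²} w‖²` decreases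
with derivative `-2 ‖S e^{-tS²} w‖²`; hence `∫₀^τ ‖a t‖² ≤ ‖u‖² / 2` and `τ ‖a τ‖² ≤ ‖u‖² / 2`.
Integrating over `[0, τ]`, bounding the integrand by AM-GM and letting `τ → ∞` gives
`|⟪u, S Z T v⟫| ≤ ‖S² Z + Z T²‖ (‖u‖² + ‖v‖²) / 4`.
-/

open ContinuousLinearMap

variable {H : Type*} [NormedAddCommGroup H] [InnerProductSpace ℂ H] [CompleteSpace H]

open Filter

variable {E : Type*} [NormedAddCommGroup E] [InnerProductSpace ℂ E]

local notation "⟪" x ", " y "⟫" => @inner ℂ _ _ x y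

theorem HasDerivAt.norm_sq_of_complex {f : ℝ → E} {f' : E} {t : ℝ} (hf : HasDerivAt f f' t) :
    HasDerivAt (fun t => ‖f t‖ ^ 2) (2 * (⟪f t, f'⟫).re) t := by
  have h := Complex.reCLM.hasFDerivAt.comp_hasDerivAt t (hf.inner ℂ hf)
  have hf2 : (fun t => ‖f t‖ ^ 2) = Complex.reCLM ∘ fun t => ⟪f t, f t⟫ := by
    ext s; exact (inner_self_eq_norm_sq (𝕜 := ℂ) (f s)).symm
  rw [hf2]
  refine h.congr_deriv ?_
  rw [Complex.reCLM_apply, Complex.add_re, ← inner_conj_symm (f t) f', Complex.conj_re]; ring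

theorem norm_inner_apply_le_mul_half_add_sq (L : E →L[ℂ] E) (x y : E) :
    ‖⟪x, L y⟫‖ ≤ ‖L‖ * ((‖x‖ ^ 2 + ‖y‖ ^ 2) / 2) :=
  calc ‖⟪x, L y⟫‖ ≤ ‖x‖ * (‖L‖ * ‖y‖) :=
        (norm_inner_le_norm x (L y)).trans (by gcongr; exact L.le_opNorm y)
    _ = ‖L‖ * (2 * ‖x‖ * ‖y‖ / 2) := by ring
    _ ≤ ‖L‖ * ((‖x‖ ^ 2 + ‖y‖ ^ 2) / 2) := by gcongr; exact two_mul_le_add_sq _ _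

variable [CompleteSpace E] {S T : E →L[ℂ] E}

theorem IsSelfAdjoint.re_inner_mul_self_apply (hS : IsSelfAdjoint S) (x : E) :
    (⟪x, (S * S) x⟫).re = ‖S x‖ ^ 2 := by
  rw [mul_apply_eq_comp, ← adjoint_inner_left, hS.adjoint_eq]
  exact inner_self_eq_norm_sq (𝕜 := ℂ) (S x)

theorem hasDerivAt_exp_neg_smul_apply (A : E →L[ℂ] E) (w : E) (t : ℝ) :
    HasDerivAt (fun t : ℝ => NormedSpace.exp ((-t) • A) w)
      (-A (NormedSpace.exp ((-t) • A) w)) t := by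
  have h := (hasDerivAt_exp_smul_const' A (-t)).scomp t (hasDerivAt_neg t)
  have h2 := ((apply ℂ E w).restrictScalars ℝ).hasFDerivAt.comp_hasDerivAt t h
  simpa [Function.comp_def] using h2

theorem continuous_exp_neg_smul_apply (A : E →L[ℂ] E) (w : E) :
    Continuous fun t : ℝ => NormedSpace.exp ((-t) • A) w :=
  continuous_iff_continuousAt.2 fun t => (hasDerivAt_exp_neg_smul_apply A w t).continuousAt

theorem IsSelfAdjoint.hasDerivAt_norm_sq_exp_neg_smul_mul_self (hS : IsSelfAdjoint S) (w : E)
    (t : ℝ) : HasDerivAt (fun t : ℝ => ‖NormedSpace.exp ((-t) • (S * S)) w‖ ^ 2)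
      (-(2 * ‖S (NormedSpace.exp ((-t) • (S * S)) w)‖ ^ 2)) t := by
  refine (hasDerivAt_exp_neg_smul_apply (S * S) w t).norm_sq_of_complex.congr_deriv ?_
  rw [inner_neg_right, Complex.neg_re, hS.re_inner_mul_self_apply]; ring

theorem IsSelfAdjoint.antitone_norm_sq_exp_neg_smul_mul_self (hS : IsSelfAdjoint S) (w : E) :
    Antitone fun t : ℝ => ‖NormedSpace.exp ((-t) • (S * S)) w‖ ^ 2 :=
  antitone_of_hasDerivAt_nonpos (hS.hasDerivAt_norm_sq_exp_neg_smul_mul_self w)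
    fun t => neg_nonpos.2 (by positivity)

theorem IsSelfAdjoint.integral_norm_sq_exp_neg_smul_mul_self_apply_le (hS : IsSelfAdjoint S)
    (u : E) (τ : ℝ) :
    ∫ t in (0 : ℝ)..τ, ‖NormedSpace.exp ((-t) • (S * S)) (S u)‖ ^ 2 ≤ ‖u‖ ^ 2 / 2 := by
  have hcomm (t : ℝ) :
      NormedSpace.exp ((-t) • (S * S)) (S u) = S (NormedSpace.exp ((-t) • (S * S)) u) := by
    rw [← mul_apply_eq_comp, ← mul_apply_eq_comp,
      (((Commute.refl S).mul_right (Commute.refl S)).smul_right (-t)).exp_right.eq]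
  have hftc := intervalIntegral.integral_eq_sub_of_hasDerivAt
    (fun t _ => hS.hasDerivAt_norm_sq_exp_neg_smul_mul_self u t)
    ((((S.continuous.comp (continuous_exp_neg_smul_apply (S * S) u)).norm.pow 2).const_mul
      2).neg.intervalIntegrable 0 τ)
  simp only [intervalIntegral.integral_neg, intervalIntegral.integral_const_mul, neg_zero,
    zero_smul, NormedSpace.exp_zero, one_apply_eq_self] at hftc
  simp only [hcomm]
  nlinarith [sq_nonneg ‖NormedSpace.exp ((-τ) • (S * S)) u‖]

theorem IsSelfAdjoint.mul_norm_sq_exp_neg_smul_mul_self_apply_le (hS : IsSelfAdjoint S)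
    (u : E) {τ : ℝ} (hτ : 0 ≤ τ) :
    τ * ‖NormedSpace.exp ((-τ) • (S * S)) (S u)‖ ^ 2 ≤ ‖u‖ ^ 2 / 2 := by
  refine le_trans ?_ (hS.integral_norm_sq_exp_neg_smul_mul_self_apply_le u τ)
  have := intervalIntegral.integral_mono_on hτ
    (intervalIntegrable_const (μ := MeasureTheory.volume))
    (((continuous_exp_neg_smul_apply (S * S) (S u)).norm.pow 2).intervalIntegrable 0 τ)
    fun t ht => hS.antitone_norm_sq_exp_neg_smul_mul_self (S u) ht.2
  simpa using this

theorem IsSelfAdjoint.hasDerivAt_inner_exp_neg_smul {A : E →L[ℂ] E} (hA : IsSelfAdjoint A)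
    (B Z : E →L[ℂ] E) (x y : E) (t : ℝ) :
    HasDerivAt (fun t : ℝ => ⟪NormedSpace.exp ((-t) • A) x, Z (NormedSpace.exp ((-t) • B) y)⟫)
      (-⟪NormedSpace.exp ((-t) • A) x, (A * Z + Z * B) (NormedSpace.exp ((-t) • B) y)⟫) t := by
  have hZ := (Z.restrictScalars ℝ).hasFDerivAt.comp_hasDerivAt t
    (hasDerivAt_exp_neg_smul_apply B y t)
  refine ((hasDerivAt_exp_neg_smul_apply A x t).inner ℂ hZ).congr_deriv ?_
  simp only [Function.comp_def, coe_restrictScalars', map_neg, inner_neg_left, inner_neg_right,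
    add_apply, mul_apply_eq_comp, inner_add_right, ← adjoint_inner_left A, hA.adjoint_eq]
  ring

theorem IsSelfAdjoint.norm_inner_mul_mul_apply_le_add_div (hS : IsSelfAdjoint S)
    (hT : IsSelfAdjoint T) (Z : E →L[ℂ] E) (u v : E) {τ : ℝ} (hτ : 0 < τ) :
    ‖⟪u, (S * Z * T) v⟫‖ ≤
      (‖S * S * Z + Z * (T * T)‖ + ‖Z‖ / τ) / 4 * (‖u‖ ^ 2 + ‖v‖ ^ 2) := by
  have hSS : IsSelfAdjoint (S * S) := by simpa only [hS.star_eq] using IsSelfAdjoint.star_mul_self S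
  set M := S * S * Z + Z * (T * T)
  set a := fun t : ℝ => NormedSpace.exp ((-t) • (S * S)) (S u)
  set b := fun t : ℝ => NormedSpace.exp ((-t) • (T * T)) (T v)
  have ha := continuous_exp_neg_smul_apply (S * S) (S u)
  have hb := continuous_exp_neg_smul_apply (T * T) (T v)
  have hftc : ⟪a τ, Z (b τ)⟫ - ⟪u, (S * Z * T) v⟫ = ∫ t in (0 : ℝ)..τ, -⟪a t, M (b t)⟫ := by
    rw [intervalIntegral.integral_eq_sub_of_hasDerivAt
      (fun t _ => hSS.hasDerivAt_inner_exp_neg_smul _ Z _ _ t)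
      ((ha.inner (M.continuous.comp hb)).neg.intervalIntegrable 0 τ)]
    simp [a, b, mul_apply_eq_comp, ← adjoint_inner_left S, hS.adjoint_eq]
  have hint : ‖∫ t in (0 : ℝ)..τ, -⟪a t, M (b t)⟫‖ ≤ ‖M‖ / 4 * (‖u‖ ^ 2 + ‖v‖ ^ 2) := by
    have hsq (f : ℝ → E) (hf : Continuous f) :
        IntervalIntegrable (fun t => ‖f t‖ ^ 2) MeasureTheory.volume 0 τ :=
      (hf.norm.pow 2).intervalIntegrable 0 τ
    refine (intervalIntegral.norm_integral_le_of_norm_le hτ.le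
      (.of_forall fun t _ => (norm_neg _).trans_le (norm_inner_apply_le_mul_half_add_sq M _ _))
      ((((hsq a ha).add (hsq b hb)).div_const 2).const_mul ‖M‖)).trans ?_
    rw [intervalIntegral.integral_const_mul, intervalIntegral.integral_div,
      intervalIntegral.integral_add (hsq a ha) (hsq b hb)]
    have hA := hS.integral_norm_sq_exp_neg_smul_mul_self_apply_le u τ
    have hB := hT.integral_norm_sq_exp_neg_smul_mul_self_apply_le v τ
    calc _ ≤ ‖M‖ * ((‖u‖ ^ 2 / 2 + ‖v‖ ^ 2 / 2) / 2) := by gcongr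
      _ = _ := by ring
  have hend : ‖⟪a τ, Z (b τ)⟫‖ ≤ ‖Z‖ / τ / 4 * (‖u‖ ^ 2 + ‖v‖ ^ 2) := by
    have hA := hS.mul_norm_sq_exp_neg_smul_mul_self_apply_le u hτ.le
    have hB := hT.mul_norm_sq_exp_neg_smul_mul_self_apply_le v hτ.le
    have hab : ‖a τ‖ ^ 2 + ‖b τ‖ ^ 2 ≤ (‖u‖ ^ 2 + ‖v‖ ^ 2) / 2 / τ := by
      rw [le_div_iff₀ hτ]; linarith
    calc _ ≤ ‖Z‖ * ((‖a τ‖ ^ 2 + ‖b τ‖ ^ 2) / 2) := norm_inner_apply_le_mul_half_add_sq Z _ _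
      _ ≤ ‖Z‖ * ((‖u‖ ^ 2 + ‖v‖ ^ 2) / 2 / τ / 2) := by gcongr
      _ = _ := by ring
  calc ‖⟪u, (S * Z * T) v⟫‖ ≤ ‖⟪a τ, Z (b τ)⟫‖ + ‖∫ t in (0 : ℝ)..τ, -⟪a t, M (b t)⟫‖ := by
        rw [← hftc]; exact norm_le_insert _ _
    _ ≤ _ := by linarith

theorem IsSelfAdjoint.norm_inner_mul_mul_apply_le (hS : IsSelfAdjoint S) (hT : IsSelfAdjoint T)
    (Z : E →L[ℂ] E) (u v : E) :
    ‖⟪u, (S * Z * T) v⟫‖ ≤ ‖S * S * Z + Z * (T * T)‖ / 4 * (‖u‖ ^ 2 + ‖v‖ ^ 2) := by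
  have hlim : Tendsto (fun τ : ℝ => (‖S * S * Z + Z * (T * T)‖ + ‖Z‖ / τ) / 4 *
      (‖u‖ ^ 2 + ‖v‖ ^ 2)) atTop (nhds ((‖S * S * Z + Z * (T * T)‖ + 0) / 4 *
      (‖u‖ ^ 2 + ‖v‖ ^ 2))) :=
    (((tendsto_const_nhds.div_atTop tendsto_id).const_add _).div_const 4).mul_const _
  simpa using ge_of_tendsto hlim ((eventually_gt_atTop 0).mono
    fun τ hτ => hS.norm_inner_mul_mul_apply_le_add_div hT Z u v hτ)

theorem IsSelfAdjoint.two_mul_norm_mul_mul_le (hS : IsSelfAdjoint S) (hT : IsSelfAdjoint T)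
    (Z : E →L[ℂ] E) : 2 * ‖S * Z * T‖ ≤ ‖S * S * Z + Z * (T * T)‖ := by
  rw [← le_div_iff₀' two_pos]
  refine opNorm_le_of_re_inner_le (by positivity) fun x y hx hy => ?_
  calc (⟪(S * Z * T) x, y⟫).re ≤ ‖⟪y, (S * Z * T) x⟫‖ := by
        rw [← inner_conj_symm, ← Complex.norm_conj]; exact Complex.re_le_norm _
    _ ≤ _ := (hS.norm_inner_mul_mul_apply_le hT Z y x).trans_eq (by rw [hx, hy]; ring)

theorem stmt2 (S T : (H →L[ℂ] H)ˣ) (hS : IsSelfAdjoint (S : H →L[ℂ] H))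
    (hT : IsSelfAdjoint (T : H →L[ℂ] H)) (X : H →L[ℂ] H) :
    2 * ‖X‖ ≤ ‖(S : H →L[ℂ] H) * X * (↑T⁻¹ : H →L[ℂ] H) + (↑S⁻¹ : H →L[ℂ] H) * X * (T : H →L[ℂ] H)‖ := by
  simpa only [mul_assoc, Units.mul_inv_cancel_left, Units.inv_mul_cancel_left, Units.inv_mul,
    mul_one] using hS.two_mul_norm_mul_mul_le hT (↑S⁻¹ * X * ↑T⁻¹)
end

section
/- For an invertible bounded operator S on a complex Hilbert space and any bounded operator X, ‖S* X S⁻¹ + S⁻¹ X S*‖ ≥ 2‖X‖. -/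
/-!
Put `A = S* X S⁻¹` and `B = S X* (S⁻¹)*`. The operator in question is `A + B*`, and
`A B = S* (X X*) (S*)⁻¹` is similar to `X X*`, so `‖X‖²` lies in its spectrum. For any two
operators, `Re ⟪A B u, u⟫ = Re ⟪(A + B*) B u, u⟫ - ‖B u‖² ≤ ‖A + B*‖² ‖u‖² / 4`, and the real
part of a spectral value never exceeds a bound on the real part of the numerical range, since
`μ - M` is coercive, hence invertible, beyond it. Thus `‖X‖² ≤ ‖A + B*‖² / 4`.
-/

open ContinuousLinearMap

open RCLike
open scoped InnerProductSpace InnerProduct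

namespace ContinuousLinearMap

variable {𝕜 E : Type*} [RCLike 𝕜] [NormedAddCommGroup E] [InnerProductSpace 𝕜 E] [CompleteSpace E]

theorem re_inner_mul_apply_self_le (A B : E →L[𝕜] E) (u : E) :
    re ⟪(A * B) u, u⟫_𝕜 ≤ (‖A + B†‖ / 2) ^ 2 * ‖u‖ ^ 2 := by
  have hsplit : re ⟪(A * B) u, u⟫_𝕜 = re ⟪(A + B†) (B u), u⟫_𝕜 - ‖B u‖ ^ 2 := by
    rw [add_apply, inner_add_left, adjoint_inner_left, map_add, inner_self_eq_norm_sq,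
      mul_apply_eq_comp]
    ring
  have hbound : re ⟪(A + B†) (B u), u⟫_𝕜 ≤ ‖A + B†‖ * ‖u‖ * ‖B u‖ :=
    calc re ⟪(A + B†) (B u), u⟫_𝕜 ≤ ‖(A + B†) (B u)‖ * ‖u‖ := re_inner_le_norm _ _
      _ ≤ ‖A + B†‖ * ‖B u‖ * ‖u‖ := by gcongr; exact le_opNorm _ _
      _ = ‖A + B†‖ * ‖u‖ * ‖B u‖ := by ring
  nlinarith [sq_nonneg (‖A + B†‖ * ‖u‖ - 2 * ‖B u‖)]

theorem re_le_of_mem_spectrum {M : E →L[𝕜] E} {r : ℝ} (hM : ∀ u, re ⟪M u, u⟫_𝕜 ≤ r * ‖u‖ ^ 2)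
    {μ : 𝕜} (hμ : μ ∈ spectrum 𝕜 M) : re μ ≤ r := by
  by_contra! hr
  refine hμ (isUnit_of_forall_le_norm_inner_map _ (c := ⟨re μ - r, by linarith⟩)
    (sub_pos.mpr hr) fun u ↦ ?_)
  calc ‖u‖ ^ 2 * (re μ - r) ≤ re ⟪(algebraMap 𝕜 (E →L[𝕜] E) μ - M) u, u⟫_𝕜 := by
        rw [sub_apply, inner_sub_left, map_sub, algebraMap_apply, inner_smul_left,
          inner_self_eq_norm_sq_to_K, ← ofReal_pow, re_mul_ofReal, conj_re]
        nlinarith [hM u]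
    _ ≤ _ := re_le_norm _

end ContinuousLinearMap

theorem CStarRing.sq_norm_mem_spectrum_mul_star {A : Type*} [CStarAlgebra A] [PartialOrder A]
    [StarOrderedRing A] [Nontrivial A] (a : A) : ‖a‖ ^ 2 ∈ spectrum ℝ (a * star a) := by
  rw [sq, ← CStarRing.norm_self_mul_star]
  exact CStarAlgebra.norm_mem_spectrum_of_nonneg (mul_star_self_nonneg a)

variable {H : Type*} [NormedAddCommGroup H] [InnerProductSpace ℂ H] [CompleteSpace H]

theorem stmt3 (S : (H →L[ℂ] H)ˣ) (X : H →L[ℂ] H) :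
    2 * ‖X‖ ≤ ‖adjoint (S : H →L[ℂ] H) * X * (↑S⁻¹ : H →L[ℂ] H) +
        (↑S⁻¹ : H →L[ℂ] H) * X * adjoint (S : H →L[ℂ] H)‖ := by
  rcases eq_or_ne X 0 with rfl | hX
  · simp
  have : Nontrivial (H →L[ℂ] H) := nontrivial_of_ne X 0 hX
  simp only [← star_eq_adjoint]
  set A := star (S : H →L[ℂ] H) * X * ↑S⁻¹
  set B := ↑S * star X * star (↑S⁻¹ : H →L[ℂ] H)
  have hB : star B = ↑S⁻¹ * X * star (S : H →L[ℂ] H) := by simp [B, mul_assoc]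
  have hAB : A * B = ↑(star S) * (X * star X) * ↑(star S)⁻¹ := by
    simp only [A, B, Units.coe_star, Units.coe_star_inv, mul_assoc, Units.inv_mul_cancel_left]
  have hspec : ((‖X‖ ^ 2 : ℝ) : ℂ) ∈ spectrum ℂ (A * B) := by
    rw [hAB, spectrum.units_conjugate]
    exact spectrum.algebraMap_mem ℂ (CStarRing.sq_norm_mem_spectrum_mul_star X)
  have hX_le : ‖X‖ ^ 2 ≤ (‖A + star B‖ / 2) ^ 2 := by
    have := re_le_of_mem_spectrum (re_inner_mul_apply_self_le A B) hspec
    rwa [re_to_complex, Complex.ofReal_re, ← star_eq_adjoint] at this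
  rw [← hB]
  linarith [(pow_le_pow_iff_left₀ (norm_nonneg X) (by positivity) two_ne_zero).mp hX_le]
end

section
/- For positive invertible bounded operators P, Q on a complex Hilbert space, any bounded operator X, and any real t ≤ 2, ‖P X Q⁻¹ + P⁻¹ X Q + t X‖ ≥ (t + 2)‖X‖. -/
/-!
Write `P = p²`, `Q = q²` with `p, q` self-adjoint and invertible. For self-adjoint `a, b` one has
the arithmetic–geometric mean inequality `2‖a Z b‖ ≤ ‖a² Z + Z b²‖`; with `Z = p⁻¹ X q⁻¹` it reads
`2‖X‖ ≤ ‖p X q⁻¹ + p⁻¹ X q‖`. Applying this to `X` and then to `V = p X q⁻¹ + p⁻¹ X q` gives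
`4‖X‖ ≤ ‖P X Q⁻¹ + P⁻¹ X Q + 2X‖`, and replacing `2X` by `tX` costs at most `(2 - t)‖X‖`.

The mean inequality comes from the heat semigroups `e^{-s a²}` and `e^{-s b²}`: the function
`ψ(s) = ⟪e^{-s a²} a u, X e^{-s b²} b v⟫` starts at `⟪u, a X b v⟫`, tends to `0` as `s → ∞`, and
has derivative `-⟪e^{-s a²} a u, (a² X + X b²) e^{-s b²} b v⟫`, while
`∫₀^∞ ‖e^{-s a²} a u‖² ds ≤ ‖u‖² / 2`.
-/

open ContinuousLinearMap NormedSpace Filter Topology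
open scoped InnerProductSpace

variable {H : Type*} [NormedAddCommGroup H] [InnerProductSpace ℂ H] [CompleteSpace H]

noncomputable def heatSemigroup (c : H →L[ℂ] H) (s : ℝ) : H →L[ℂ] H := exp (s • -(c * c))

section HeatSemigroup

variable {c : H →L[ℂ] H}

lemma heatSemigroup_zero (c : H →L[ℂ] H) : heatSemigroup c 0 = 1 := by simp [heatSemigroup]

lemma commute_heatSemigroup (c : H →L[ℂ] H) (s : ℝ) : Commute c (heatSemigroup c s) :=
  (((Commute.refl c).mul_right (Commute.refl c)).neg_right.smul_right s).exp_right

lemma map_heatSemigroup_apply (c : H →L[ℂ] H) (s : ℝ) (u : H) :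
    c (heatSemigroup c s u) = heatSemigroup c s (c u) :=
  DFunLike.congr_fun (commute_heatSemigroup c s).eq u

lemma hasDerivAt_heatSemigroup_apply (c : H →L[ℂ] H) (u : H) (s : ℝ) :
    HasDerivAt (fun s => heatSemigroup c s u) (-c (c (heatSemigroup c s u))) s :=
  ((apply ℂ H u).restrictScalars ℝ).hasFDerivAt.comp_hasDerivAt s
    (hasDerivAt_exp_smul_const' (𝕂 := ℝ) (-(c * c)) s)

lemma continuous_heatSemigroup_apply (c : H →L[ℂ] H) (u : H) :
    Continuous fun s => heatSemigroup c s u :=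
  continuous_iff_continuousAt.2 fun s => (hasDerivAt_heatSemigroup_apply c u s).continuousAt

lemma hasDerivAt_norm_heatSemigroup_apply_sq (hc : IsSelfAdjoint c) (u : H) (s : ℝ) :
    HasDerivAt (fun s => ‖heatSemigroup c s u‖ ^ 2)
      (-(2 * ‖heatSemigroup c s (c u)‖ ^ 2)) s := by
  let _ : InnerProductSpace ℝ H := .rclikeToReal ℂ H
  convert (hasDerivAt_heatSemigroup_apply c u s).norm_sq using 1
  rw [real_inner_eq_re_inner ℂ, inner_neg_right, ← adjoint_inner_left, hc.adjoint_eq, map_neg,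
    inner_self_eq_norm_sq, map_heatSemigroup_apply]
  ring

lemma antitone_norm_heatSemigroup_apply_sq (hc : IsSelfAdjoint c) (u : H) :
    Antitone fun s => ‖heatSemigroup c s u‖ ^ 2 :=
  antitone_of_hasDerivAt_nonpos (hasDerivAt_norm_heatSemigroup_apply_sq hc u) fun _ =>
    neg_nonpos.2 (by positivity)

lemma integral_norm_heatSemigroup_apply_sq_le (hc : IsSelfAdjoint c) (u : H) (T : ℝ) :
    ∫ s in (0)..T, ‖heatSemigroup c s (c u)‖ ^ 2 ≤ ‖u‖ ^ 2 / 2 := by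
  have hftc := intervalIntegral.integral_eq_sub_of_hasDerivAt
    (fun s _ => hasDerivAt_norm_heatSemigroup_apply_sq hc u s)
    ((((continuous_heatSemigroup_apply c (c u)).norm.pow 2).const_mul 2).neg.intervalIntegrable
      0 T)
  rw [intervalIntegral.integral_neg, intervalIntegral.integral_const_mul, heatSemigroup_zero,
    one_apply_eq_self] at hftc
  nlinarith [sq_nonneg ‖heatSemigroup c T u‖]

lemma norm_heatSemigroup_apply_sq_le (hc : IsSelfAdjoint c) (u : H) {T : ℝ} (hT : 0 < T) :
    ‖heatSemigroup c T (c u)‖ ^ 2 ≤ ‖u‖ ^ 2 / (2 * T) := by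
  have hmono : T * ‖heatSemigroup c T (c u)‖ ^ 2 ≤
      ∫ s in (0)..T, ‖heatSemigroup c s (c u)‖ ^ 2 := by
    simpa [hT.le] using intervalIntegral.integral_mono_on (μ := MeasureTheory.volume) hT.le
      (continuous_const.intervalIntegrable 0 T)
      (((continuous_heatSemigroup_apply c (c u)).norm.pow 2).intervalIntegrable 0 T)
      fun s hs => antitone_norm_heatSemigroup_apply_sq hc (c u) hs.2
  rw [le_div_iff₀ (by positivity)]
  nlinarith [integral_norm_heatSemigroup_apply_sq_le hc u T]

lemma tendsto_heatSemigroup_apply_atTop (hc : IsSelfAdjoint c) (u : H) :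
    Tendsto (fun s => heatSemigroup c s (c u)) atTop (𝓝 0) := by
  have hsq : Tendsto (fun s => ‖heatSemigroup c s (c u)‖ ^ 2) atTop (𝓝 0) :=
    squeeze_zero' (.of_forall fun _ => by positivity)
      ((eventually_gt_atTop 0).mono fun _ hT => norm_heatSemigroup_apply_sq_le hc u hT)
      (tendsto_const_nhds.div_atTop (tendsto_id.const_mul_atTop two_pos))
  rw [tendsto_zero_iff_norm_tendsto_zero]
  simpa using hsq.sqrt

end HeatSemigroup

lemma hasDerivAt_inner_heatSemigroup {a b : H →L[ℂ] H} (ha : IsSelfAdjoint a) (X : H →L[ℂ] H)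
    (x y : H) (s : ℝ) :
    HasDerivAt (fun s => ⟪heatSemigroup a s x, X (heatSemigroup b s y)⟫_ℂ)
      (-⟪heatSemigroup a s x, (a * a * X + X * (b * b)) (heatSemigroup b s y)⟫_ℂ) s := by
  have hX : HasDerivAt (fun s => X (heatSemigroup b s y))
      (X (-b (b (heatSemigroup b s y)))) s :=
    (X.restrictScalars ℝ).hasFDerivAt.comp_hasDerivAt s (hasDerivAt_heatSemigroup_apply b y s)
  refine ((hasDerivAt_heatSemigroup_apply a x s).inner ℂ hX).congr_deriv ?_
  have hsym : ∀ z w, ⟪a z, w⟫_ℂ = ⟪z, a w⟫_ℂ := ha.isSymmetric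
  simp only [add_apply, mul_apply_eq_comp, map_neg, inner_add_right, inner_neg_left,
    inner_neg_right, hsym]
  ring

lemma norm_inner_mul_mul_le_norm_inner_heatSemigroup_add {a b : H →L[ℂ] H}
    (ha : IsSelfAdjoint a) (hb : IsSelfAdjoint b) (X : H →L[ℂ] H) (u v : H) {T : ℝ}
    (hT : 0 ≤ T) :
    ‖⟪u, (a * X * b) v⟫_ℂ‖ ≤ ‖⟪heatSemigroup a T (a u), X (heatSemigroup b T (b v))⟫_ℂ‖ +
      ‖a * a * X + X * (b * b)‖ * (‖u‖ ^ 2 + ‖v‖ ^ 2) / 4 := by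
  set Y := a * a * X + X * (b * b)
  set p := fun s => heatSemigroup a s (a u)
  set r := fun s => heatSemigroup b s (b v)
  set ψ := fun s => ⟪p s, X (r s)⟫_ℂ
  have hψ0 : ψ 0 = ⟪u, (a * X * b) v⟫_ℂ := by
    simpa [ψ, p, r, heatSemigroup_zero] using ha.isSymmetric u (X (b v))
  have hp := continuous_heatSemigroup_apply a (a u)
  have hr := continuous_heatSemigroup_apply b (b v)
  have hftc : ψ T - ψ 0 = ∫ s in (0)..T, -⟪p s, Y (r s)⟫_ℂ :=
    (intervalIntegral.integral_eq_sub_of_hasDerivAt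
      (fun s _ => hasDerivAt_inner_heatSemigroup ha X (a u) (b v) s)
      ((hp.inner (𝕜 := ℂ) (Y.continuous.comp hr)).neg.intervalIntegrable _ _)).symm
  have hpt : ∀ s, ‖-⟪p s, Y (r s)⟫_ℂ‖ ≤ ‖Y‖ / 2 * (‖p s‖ ^ 2 + ‖r s‖ ^ 2) := fun s => by
    rw [norm_neg]
    calc ‖⟪p s, Y (r s)⟫_ℂ‖ ≤ ‖p s‖ * (‖Y‖ * ‖r s‖) :=
          (norm_inner_le_norm _ _).trans (by gcongr; exact Y.le_opNorm _)
      _ ≤ ‖Y‖ / 2 * (‖p s‖ ^ 2 + ‖r s‖ ^ 2) := by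
          nlinarith [norm_nonneg Y, sq_nonneg (‖p s‖ - ‖r s‖)]
  rw [← hψ0]
  calc ‖ψ 0‖ = ‖ψ T - (ψ T - ψ 0)‖ := by rw [sub_sub_cancel]
    _ ≤ ‖ψ T‖ + ∫ s in (0)..T, ‖Y‖ / 2 * (‖p s‖ ^ 2 + ‖r s‖ ^ 2) := by
        rw [hftc]
        refine (norm_sub_le _ _).trans ?_
        gcongr
        exact intervalIntegral.norm_integral_le_of_norm_le hT (.of_forall fun s _ => hpt s)
          ((by fun_prop : Continuous fun s => ‖Y‖ / 2 * (‖p s‖ ^ 2 + ‖r s‖ ^ 2)).intervalIntegrable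
            _ _)
    _ = ‖ψ T‖ + ‖Y‖ / 2 * ((∫ s in (0)..T, ‖p s‖ ^ 2) + ∫ s in (0)..T, ‖r s‖ ^ 2) := by
        rw [intervalIntegral.integral_const_mul, intervalIntegral.integral_add
          ((by fun_prop : Continuous fun s => ‖p s‖ ^ 2).intervalIntegrable _ _)
          ((by fun_prop : Continuous fun s => ‖r s‖ ^ 2).intervalIntegrable _ _)]
    _ ≤ ‖ψ T‖ + ‖Y‖ / 2 * (‖u‖ ^ 2 / 2 + ‖v‖ ^ 2 / 2) := by
        gcongr
        · exact integral_norm_heatSemigroup_apply_sq_le ha u T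
        · exact integral_norm_heatSemigroup_apply_sq_le hb v T
    _ = ‖ψ T‖ + ‖Y‖ * (‖u‖ ^ 2 + ‖v‖ ^ 2) / 4 := by ring

lemma norm_inner_mul_mul_le {a b : H →L[ℂ] H} (ha : IsSelfAdjoint a) (hb : IsSelfAdjoint b)
    (X : H →L[ℂ] H) (u v : H) :
    ‖⟪u, (a * X * b) v⟫_ℂ‖ ≤ ‖a * a * X + X * (b * b)‖ * (‖u‖ ^ 2 + ‖v‖ ^ 2) / 4 := by
  have hψ : Tendsto (fun T => ⟪heatSemigroup a T (a u), X (heatSemigroup b T (b v))⟫_ℂ) atTop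
      (𝓝 0) := by
    simpa using (tendsto_heatSemigroup_apply_atTop ha u).inner (𝕜 := ℂ)
      ((X.continuous.tendsto 0).comp (tendsto_heatSemigroup_apply_atTop hb v))
  exact ge_of_tendsto (by simpa using hψ.norm.add_const _) ((eventually_ge_atTop 0).mono
    fun _ hT => norm_inner_mul_mul_le_norm_inner_heatSemigroup_add ha hb X u v hT)

lemma two_mul_norm_mul_mul_le {a b : H →L[ℂ] H} (ha : IsSelfAdjoint a) (hb : IsSelfAdjoint b)
    (X : H →L[ℂ] H) : 2 * ‖a * X * b‖ ≤ ‖a * a * X + X * (b * b)‖ := by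
  rw [← le_div_iff₀' two_pos]
  refine opNorm_le_of_unit_norm (by positivity) fun v hv => ?_
  set w := (a * X * b) v
  rcases eq_or_ne w 0 with hw | hw
  · rw [hw, norm_zero]; positivity
  have hw' : ‖w‖ ≠ 0 := norm_ne_zero_iff.2 hw
  have hunit : ‖(‖w‖⁻¹ : ℂ) • w‖ = 1 := by simp [norm_smul, hw']
  have hinner : ‖⟪(‖w‖⁻¹ : ℂ) • w, w⟫_ℂ‖ = ‖w‖ := by
    simp only [inner_smul_left, inner_self_eq_norm_sq_to_K, norm_mul, RCLike.norm_conj, norm_inv,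
      norm_pow, RCLike.norm_ofReal, Complex.norm_real, norm_norm, abs_norm]
    field_simp
  calc ‖w‖ = ‖⟪(‖w‖⁻¹ : ℂ) • w, (a * X * b) v⟫_ℂ‖ := hinner.symm
    _ ≤ ‖a * a * X + X * (b * b)‖ * (‖(‖w‖⁻¹ : ℂ) • w‖ ^ 2 + ‖v‖ ^ 2) / 4 :=
        norm_inner_mul_mul_le ha hb X _ v
    _ = ‖a * a * X + X * (b * b)‖ / 2 := by rw [hunit, hv]; ring

lemma exists_isSelfAdjoint_unit_mul_self_eq {A : Type*} [CStarAlgebra A] [PartialOrder A]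
    [StarOrderedRing A] (u : Aˣ) (hu : 0 ≤ (u : A)) :
    ∃ p : Aˣ, IsSelfAdjoint (p : A) ∧ p * p = u := by
  obtain ⟨b, hb, hsa, hbu⟩ :=
    CStarAlgebra.isStrictlyPositive_iff_exists_isUnit_and_isSelfAdjoint_and_eq_mul_self.1
      (IsStrictlyPositive.iff_of_unital.2 ⟨hu, u.isUnit⟩)
  exact ⟨hb.unit, hsa, Units.ext hbu.symm⟩

lemma two_mul_norm_le_norm_mul_mul_inv_add {p q : (H →L[ℂ] H)ˣ}
    (hp : IsSelfAdjoint (p : H →L[ℂ] H)) (hq : IsSelfAdjoint (q : H →L[ℂ] H)) (X : H →L[ℂ] H) :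
    2 * ‖X‖ ≤ ‖p * X * ↑q⁻¹ + ↑p⁻¹ * X * q‖ := by
  convert two_mul_norm_mul_mul_le hp hq (↑p⁻¹ * X * ↑q⁻¹) using 3 <;> simp [mul_assoc]

theorem stmt4 (P Q : (H →L[ℂ] H)ˣ) (hP : 0 ≤ (P : H →L[ℂ] H)) (hQ : 0 ≤ (Q : H →L[ℂ] H))
    (X : H →L[ℂ] H) (t : ℝ) (ht : t ≤ 2) :
    (t + 2) * ‖X‖ ≤ ‖(P : H →L[ℂ] H) * X * (↑Q⁻¹ : H →L[ℂ] H) +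
        (↑P⁻¹ : H →L[ℂ] H) * X * (Q : H →L[ℂ] H) + t • X‖ := by
  obtain ⟨p, hp, rfl⟩ := exists_isSelfAdjoint_unit_mul_self_eq P hP
  obtain ⟨q, hq, rfl⟩ := exists_isSelfAdjoint_unit_mul_self_eq Q hQ
  set Z := (↑(p * p) : H →L[ℂ] H) * X * ↑(q * q)⁻¹ + ↑(p * p)⁻¹ * X * ↑(q * q)
  set V := (p : H →L[ℂ] H) * X * ↑q⁻¹ + ↑p⁻¹ * X * q
  have hV : (p : H →L[ℂ] H) * V * ↑q⁻¹ + ↑p⁻¹ * V * q = Z + (2 : ℝ) • X := by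
    simp only [V, Z, mul_add, add_mul, mul_assoc, Units.mul_inv_cancel_left,
      Units.inv_mul_cancel_left, Units.val_mul, mul_inv_rev, Units.mul_inv, Units.inv_mul, mul_one]
    module
  have hZ : 4 * ‖X‖ ≤ ‖Z + (2 : ℝ) • X‖ := by
    have hX := two_mul_norm_le_norm_mul_mul_inv_add hp hq X
    have hV' := two_mul_norm_le_norm_mul_mul_inv_add hp hq V
    rw [hV] at hV'
    linarith
  calc (t + 2) * ‖X‖ = 4 * ‖X‖ - ‖(2 - t) • X‖ := by
        rw [norm_smul, Real.norm_of_nonneg (by linarith)]; ring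
    _ ≤ ‖Z + (2 : ℝ) • X‖ - ‖(2 - t) • X‖ := by gcongr
    _ ≤ ‖Z + t • X‖ := (norm_sub_norm_le _ _).trans_eq (congrArg _ (by module))
end

section
/- For positive bounded operators A, B on a complex Hilbert space and a bounded operator X, ‖A²X + XB² + 2AXB‖ ≥ 2‖A^{3/2} X B^{1/2} + A^{1/2} X B^{3/2}‖. -/
/-!
For positive `A`, `B` the operator `X` is recovered from `Y = AX + XB` through
`X = ∫₀^τ e^{-tA} Y e^{-tB} dt + e^{-τA} X e^{-τB}`, the integrand being
`-d/dt (e^{-tA} X e^{-tB})`. Multiplying by `A^{1/2}` on the left and `B^{1/2}` on the right,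
the matrix coefficient `⟨A^{1/2}e^{-tA} Y B^{1/2}e^{-tB} f, g⟩` is at most
`‖Y‖ (‖B^{1/2}e^{-tB} f‖² + ‖A^{1/2}e^{-tA} g‖²) / 2`, and
`∫₀^τ ‖A^{1/2}e^{-tA} g‖² dt = (‖g‖² - ‖e^{-τA} g‖²) / 2`. The remaining term is `O(1/τ)`,
so `2‖A^{1/2} X B^{1/2}‖ ≤ ‖AX + XB‖`; the theorem is this inequality applied to `AX + XB`
in place of `X`.
-/

open ContinuousLinearMap

variable {H : Type*} [NormedAddCommGroup H] [InnerProductSpace ℂ H] [CompleteSpace H]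

open NormedSpace Real Filter
open scoped NNReal Topology

lemma Real.sqrt_mul_exp_neg_mul_le {t x : ℝ} (ht : 0 < t) (hx : 0 ≤ x) :
    √x * rexp (-(t * x)) ≤ √((2 * t)⁻¹) := by
  rw [← Real.sqrt_sq (Real.exp_pos _).le, ← Real.sqrt_mul hx, ← Real.exp_nat_mul]
  refine Real.sqrt_le_sqrt ?_
  rw [Nat.cast_ofNat, mul_neg, ← mul_assoc, Real.exp_neg, ← div_eq_mul_inv,
    div_le_iff₀ (Real.exp_pos _), inv_mul_eq_div, le_div_iff₀ (by positivity)]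
  linarith [Real.add_one_le_exp (2 * t * x)]

namespace OperatorAMGM

section BanachAlgebra

variable {𝔸 : Type*} [NormedRing 𝔸] [NormedAlgebra ℝ 𝔸] {a b : 𝔸}

noncomputable def expNeg (a : 𝔸) (t : ℝ) : 𝔸 := exp (t • -a)

@[simp]
lemma expNeg_zero : expNeg a 0 = 1 := by simp [expNeg]

lemma commute_expNeg (t : ℝ) : Commute a (expNeg a t) :=
  ((Commute.refl a).neg_right.smul_right t).exp_right

variable [CompleteSpace 𝔸]

@[fun_prop]
lemma continuous_expNeg : Continuous (expNeg a) :=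
  (differentiable_exp_smul_const ℝ (-a)).continuous

lemma hasDerivAt_expNeg (t : ℝ) : HasDerivAt (expNeg a) (-(a * expNeg a t)) t := by
  have h := hasDerivAt_exp_smul_const' (𝕂 := ℝ) (-a) t
  rwa [neg_mul] at h

lemma integral_expNeg_mul_mul_expNeg (x : 𝔸) (τ : ℝ) :
    ∫ t in (0 : ℝ)..τ, expNeg a t * (a * x + x * b) * expNeg b t
      = x - expNeg a τ * x * expNeg b τ := by
  have hderiv : ∀ t ∈ Set.uIcc (0 : ℝ) τ, HasDerivAt (fun t => -(expNeg a t * x * expNeg b t))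
      (expNeg a t * (a * x + x * b) * expNeg b t) t := fun t _ => by
    refine (((hasDerivAt_expNeg t).mul_const x).mul (hasDerivAt_expNeg t)).neg.congr_deriv ?_
    rw [(commute_expNeg t).eq]
    noncomm_ring
  rw [intervalIntegral.integral_eq_sub_of_hasDerivAt hderiv
    ((by fun_prop : Continuous _).intervalIntegrable _ _)]
  simp only [expNeg_zero, mul_one, one_mul]
  abel

end BanachAlgebra

section CStarAlgebra

variable {𝒜 : Type*} [CStarAlgebra 𝒜] {a b : 𝒜}

noncomputable def sqrtExpNeg (a : 𝒜) (t : ℝ) : 𝒜 := cfc (fun x => √x * rexp (-(t * x))) a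

lemma expNeg_eq_cfc (ha : IsSelfAdjoint a) (t : ℝ) :
    expNeg a t = cfc (fun x => rexp (-(t * x))) a := by
  have hlin : cfc (fun x : ℝ => -(t * x)) a = t • -a := by
    rw [cfc_neg, cfc_const_mul t _ a, cfc_id' ℝ a, smul_neg]
  rw [cfc_comp' Real.exp (fun x : ℝ => -(t * x)) a, hlin,
    CFC.real_exp_eq_normedSpace_exp (hlin ▸ cfc_predicate _ a), expNeg]

lemma cfc_sqrt_mul_expNeg (ha : IsSelfAdjoint a) (t : ℝ) :
    cfc Real.sqrt a * expNeg a t = sqrtExpNeg a t := by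
  rw [expNeg_eq_cfc ha, ← cfc_mul Real.sqrt _ a, sqrtExpNeg]

lemma expNeg_mul_cfc_sqrt (ha : IsSelfAdjoint a) (t : ℝ) :
    expNeg a t * cfc Real.sqrt a = sqrtExpNeg a t := by
  rw [expNeg_eq_cfc ha, ← cfc_mul _ Real.sqrt a, sqrtExpNeg]
  exact cfc_congr fun x _ => mul_comm _ _

lemma isSelfAdjoint_expNeg (ha : IsSelfAdjoint a) (t : ℝ) : IsSelfAdjoint (expNeg a t) :=
  expNeg_eq_cfc ha t ▸ cfc_predicate _ a

lemma isSelfAdjoint_sqrtExpNeg (t : ℝ) : IsSelfAdjoint (sqrtExpNeg a t) := cfc_predicate _ a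

lemma continuous_sqrtExpNeg (ha : IsSelfAdjoint a) : Continuous (sqrtExpNeg a) := by
  simp_rw [funext (cfc_sqrt_mul_expNeg ha) |>.symm]
  fun_prop

lemma cfc_sqrt_mul_mul_cfc_sqrt_eq (ha : IsSelfAdjoint a) (hb : IsSelfAdjoint b) (x : 𝒜) (τ : ℝ) :
    cfc Real.sqrt a * x * cfc Real.sqrt b =
      (∫ t in (0 : ℝ)..τ, sqrtExpNeg a t * (a * x + x * b) * sqrtExpNeg b t)
        + sqrtExpNeg a τ * x * sqrtExpNeg b τ := by
  set L := mulLeftRight ℝ 𝒜 (cfc Real.sqrt a) (cfc Real.sqrt b)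
  have hL : ∀ t y, L (expNeg a t * y * expNeg b t) = sqrtExpNeg a t * y * sqrtExpNeg b t := by
    intro t y
    simp only [L, mulLeftRight_apply, ← cfc_sqrt_mul_expNeg ha, ← expNeg_mul_cfc_sqrt hb, mul_assoc]
  calc cfc Real.sqrt a * x * cfc Real.sqrt b
      = L ((∫ t in (0 : ℝ)..τ, expNeg a t * (a * x + x * b) * expNeg b t)
          + expNeg a τ * x * expNeg b τ) := by
        rw [integral_expNeg_mul_mul_expNeg, sub_add_cancel, mulLeftRight_apply]
    _ = _ := by
        rw [map_add, hL,
          ← L.intervalIntegral_comp_comm ((by fun_prop : Continuous _).intervalIntegrable _ _)]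
        simp only [hL]

variable [PartialOrder 𝒜] [StarOrderedRing 𝒜]

lemma cfc_sqrt_mul_self (ha : 0 ≤ a) : cfc Real.sqrt a * cfc Real.sqrt a = a := by
  conv_rhs => rw [← cfc_id' ℝ a]
  rw [← cfc_mul ..]
  exact cfc_congr fun x hx => Real.mul_self_sqrt (spectrum_nonneg_of_nonneg ha hx)

lemma sqrtExpNeg_mul_self (ha : 0 ≤ a) (t : ℝ) :
    sqrtExpNeg a t * sqrtExpNeg a t = expNeg a t * a * expNeg a t := by
  nth_rw 2 [← cfc_sqrt_mul_expNeg ha.isSelfAdjoint]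
  rw [← expNeg_mul_cfc_sqrt ha.isSelfAdjoint, mul_assoc, ← mul_assoc (cfc Real.sqrt a),
    cfc_sqrt_mul_self ha, mul_assoc]

lemma norm_sqrtExpNeg_le (ha : 0 ≤ a) {t : ℝ} (ht : 0 < t) : ‖sqrtExpNeg a t‖ ≤ √((2 * t)⁻¹) :=
  norm_cfc_le (Real.sqrt_nonneg _) fun x hx => by
    rw [Real.norm_of_nonneg (by positivity)]
    exact Real.sqrt_mul_exp_neg_mul_le ht (spectrum_nonneg_of_nonneg ha hx)

lemma integral_sqrtExpNeg_mul_self (ha : 0 ≤ a) (τ : ℝ) :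
    ∫ t in (0 : ℝ)..τ, sqrtExpNeg a t * sqrtExpNeg a t
      = (2 : ℝ)⁻¹ • (1 - expNeg a τ * expNeg a τ) := by
  rw [eq_inv_smul_iff₀ two_ne_zero]
  have h := integral_expNeg_mul_mul_expNeg (a := a) (b := a) 1 τ
  simp only [mul_one, one_mul] at h
  rw [← intervalIntegral.integral_smul, ← h]
  congr with t
  rw [sqrtExpNeg_mul_self ha, two_smul]
  noncomm_ring

lemma rpow_add_one_eq_rpow_mul (ha : 0 ≤ a) {y : ℝ} (hy : 0 ≤ y) : a ^ (y + 1) = a ^ y * a := by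
  have hid := cfc_id ℝ≥0 a
  rw [CFC.rpow_def, CFC.rpow_def]
  nth_rw 3 [← hid]
  rw [← cfc_mul _ _ a (NNReal.continuous_rpow_const hy).continuousOn]
  exact cfc_congr fun x _ => by rw [NNReal.rpow_add' (by positivity), NNReal.rpow_one, id]

lemma commute_rpow_self (ha : 0 ≤ a) (y : ℝ) : Commute a (a ^ y) := by
  have h := cfc_commute_cfc (R := ℝ≥0) id (· ^ y) a
  rwa [cfc_id ℝ≥0 a] at h

lemma rpow_half_eq_cfc_sqrt (ha : 0 ≤ a) : a ^ (1 / 2 : ℝ) = cfc Real.sqrt a := by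
  rw [CFC.rpow_eq_cfc_real ha]
  exact cfc_congr fun x _ => (Real.sqrt_eq_rpow x).symm

end CStarAlgebra

section HilbertSpace

open scoped InnerProductSpace
open RCLike

variable {A B : H →L[ℂ] H}

lemma re_inner_integral_apply {T : ℝ → H →L[ℂ] H} {α β : ℝ}
    (hT : IntervalIntegrable T MeasureTheory.volume α β) (f g : H) :
    re ⟪(∫ t in α..β, T t) f, g⟫_ℂ = ∫ t in α..β, re ⟪T t f, g⟫_ℂ := by
  let L : (H →L[ℂ] H) →L[ℝ] ℝ :=
    Complex.reCLM.comp (((innerSL ℂ g).comp (apply ℂ H f)).restrictScalars ℝ)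
  have hL : ∀ T, L T = re ⟪T f, g⟫_ℂ := fun T => inner_re_symm (𝕜 := ℂ) g (T f)
  simp only [← hL, L.intervalIntegral_comp_comm hT]

lemma IsSelfAdjoint.re_inner_mul_mul_apply_le {P : H →L[ℂ] H} (hP : IsSelfAdjoint P)
    (Y Q : H →L[ℂ] H) (f g : H) :
    re ⟪(P * Y * Q) f, g⟫_ℂ ≤ ‖Y‖ * ((‖Q f‖ ^ 2 + ‖P g‖ ^ 2) / 2) := by
  calc re ⟪(P * Y * Q) f, g⟫_ℂ = re ⟪Y (Q f), P g⟫_ℂ := congrArg re (hP.isSymmetric _ _)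
    _ ≤ ‖Y (Q f)‖ * ‖P g‖ := re_inner_le_norm _ _
    _ ≤ ‖Y‖ * ‖Q f‖ * ‖P g‖ := by gcongr; exact Y.le_opNorm _
    _ ≤ ‖Y‖ * ((‖Q f‖ ^ 2 + ‖P g‖ ^ 2) / 2) := by
        rw [mul_assoc]; gcongr; linarith [two_mul_le_add_sq ‖Q f‖ ‖P g‖]

lemma integral_norm_sqrtExpNeg_apply_sq_le (hA : 0 ≤ A) (g : H) (τ : ℝ) :
    ∫ t in (0 : ℝ)..τ, ‖sqrtExpNeg A t g‖ ^ 2 ≤ ‖g‖ ^ 2 / 2 := by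
  have hsq : ∀ {T : H →L[ℂ] H}, IsSelfAdjoint T → ‖T g‖ ^ 2 = re ⟪(T * T) g, g⟫_ℂ := by
    intro T hT
    rw [T.apply_norm_sq_eq_inner_adjoint_left, hT.adjoint_eq]; rfl
  have hP := continuous_sqrtExpNeg hA.isSelfAdjoint
  calc ∫ t in (0 : ℝ)..τ, ‖sqrtExpNeg A t g‖ ^ 2
      = re ⟪(∫ t in (0 : ℝ)..τ, sqrtExpNeg A t * sqrtExpNeg A t) g, g⟫_ℂ := by
        simp only [hsq (isSelfAdjoint_sqrtExpNeg _)]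
        exact (re_inner_integral_apply ((hP.mul hP).intervalIntegrable _ _) g g).symm
    _ = (‖g‖ ^ 2 - ‖expNeg A τ g‖ ^ 2) / 2 := by
        rw [integral_sqrtExpNeg_mul_self hA, hsq (isSelfAdjoint_expNeg hA.isSelfAdjoint τ),
          smul_apply, RCLike.real_smul_eq_coe_smul (K := ℂ), inner_smul_left, sub_apply,
          one_apply_eq_self, inner_sub_left, inner_self_eq_norm_sq_to_K, ← RCLike.ofReal_pow,
          RCLike.conj_ofReal, RCLike.re_ofReal_mul, map_sub, RCLike.ofReal_re]
        ring
    _ ≤ ‖g‖ ^ 2 / 2 := by gcongr; exact sub_le_self _ (sq_nonneg _)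

lemma norm_cfc_sqrt_mul_mul_cfc_sqrt_le (hA : 0 ≤ A) (hB : 0 ≤ B) (X : H →L[ℂ] H) {τ : ℝ}
    (hτ : 0 < τ) :
    ‖cfc Real.sqrt A * X * cfc Real.sqrt B‖ ≤ ‖A * X + X * B‖ / 2 + ‖X‖ * (2 * τ)⁻¹ := by
  set Y := A * X + X * B
  refine opNorm_le_of_re_inner_le (by positivity) fun f g hf hg => ?_
  have hPA := continuous_sqrtExpNeg hA.isSelfAdjoint
  have hPB := continuous_sqrtExpNeg hB.isSelfAdjoint
  have hcont : Continuous fun t => sqrtExpNeg A t * Y * sqrtExpNeg B t := by fun_prop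
  have hbulk : ∫ t in (0 : ℝ)..τ, re ⟪(sqrtExpNeg A t * Y * sqrtExpNeg B t) f, g⟫_ℂ ≤ ‖Y‖ / 2 :=
    calc ∫ t in (0 : ℝ)..τ, re ⟪(sqrtExpNeg A t * Y * sqrtExpNeg B t) f, g⟫_ℂ
        ≤ ∫ t in (0 : ℝ)..τ, ‖Y‖ * ((‖sqrtExpNeg B t f‖ ^ 2 + ‖sqrtExpNeg A t g‖ ^ 2) / 2) := by
          refine intervalIntegral.integral_mono_on hτ.le ?_ ?_ fun t _ =>
            IsSelfAdjoint.re_inner_mul_mul_apply_le (isSelfAdjoint_sqrtExpNeg t) Y _ f g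
          · exact Continuous.intervalIntegrable (by fun_prop) _ _
          · exact Continuous.intervalIntegrable (by fun_prop) _ _
      _ = ‖Y‖ / 2 * ((∫ t in (0 : ℝ)..τ, ‖sqrtExpNeg B t f‖ ^ 2)
            + ∫ t in (0 : ℝ)..τ, ‖sqrtExpNeg A t g‖ ^ 2) := by
          rw [← intervalIntegral.integral_add (Continuous.intervalIntegrable (by fun_prop) _ _)
            (Continuous.intervalIntegrable (by fun_prop) _ _),
            ← intervalIntegral.integral_const_mul]
          congr with t
          ring
      _ ≤ ‖Y‖ / 2 * (‖f‖ ^ 2 / 2 + ‖g‖ ^ 2 / 2) := by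
          gcongr <;> exact integral_norm_sqrtExpNeg_apply_sq_le ‹_› _ τ
      _ = ‖Y‖ / 2 := by rw [hf, hg]; ring
  have hcorner : re ⟪(sqrtExpNeg A τ * X * sqrtExpNeg B τ) f, g⟫_ℂ ≤ ‖X‖ * (2 * τ)⁻¹ :=
    calc re ⟪(sqrtExpNeg A τ * X * sqrtExpNeg B τ) f, g⟫_ℂ
        ≤ ‖(sqrtExpNeg A τ * X * sqrtExpNeg B τ) f‖ := by
          simpa only [hg, mul_one] using re_inner_le_norm _ g
      _ ≤ ‖sqrtExpNeg A τ * X * sqrtExpNeg B τ‖ := by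
          simpa only [hf, mul_one] using le_opNorm _ f
      _ ≤ ‖sqrtExpNeg A τ‖ * ‖X‖ * ‖sqrtExpNeg B τ‖ := norm_mul₃_le
      _ ≤ √((2 * τ)⁻¹) * ‖X‖ * √((2 * τ)⁻¹) := by
          gcongr <;> exact norm_sqrtExpNeg_le ‹_› hτ
      _ = ‖X‖ * (2 * τ)⁻¹ := by
          rw [mul_right_comm, Real.mul_self_sqrt (by positivity), mul_comm]
  rw [cfc_sqrt_mul_mul_cfc_sqrt_eq hA.isSelfAdjoint hB.isSelfAdjoint X τ, add_apply, inner_add_left,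
    map_add, re_inner_integral_apply (hcont.intervalIntegrable _ _)]
  linarith

lemma two_mul_norm_rpow_half_mul_mul_rpow_half_le (hA : 0 ≤ A) (hB : 0 ≤ B) (X : H →L[ℂ] H) :
    2 * ‖A ^ (1 / 2 : ℝ) * X * B ^ (1 / 2 : ℝ)‖ ≤ ‖A * X + X * B‖ := by
  have hlim : Tendsto (fun τ : ℝ => ‖A * X + X * B‖ / 2 + ‖X‖ * (2 * τ)⁻¹) atTop
      (𝓝 (‖A * X + X * B‖ / 2 + ‖X‖ * 0)) :=
    ((tendsto_inv_atTop_zero.comp (tendsto_id.const_mul_atTop two_pos)).const_mul _).const_add _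
  have := ge_of_tendsto hlim ((eventually_gt_atTop 0).mono fun τ hτ =>
    norm_cfc_sqrt_mul_mul_cfc_sqrt_le hA hB X hτ)
  rw [rpow_half_eq_cfc_sqrt hA, rpow_half_eq_cfc_sqrt hB]
  linarith

end HilbertSpace

end OperatorAMGM

open OperatorAMGM in
theorem stmt8 (A B : H →L[ℂ] H) (hA : 0 ≤ A) (hB : 0 ≤ B) (X : H →L[ℂ] H) :
    2 * ‖A ^ ((3:ℝ)/2) * X * B ^ ((1:ℝ)/2) + A ^ ((1:ℝ)/2) * X * B ^ ((3:ℝ)/2)‖ ≤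
      ‖A ^ 2 * X + X * B ^ 2 + (2 : ℝ) • (A * X * B)‖ := by
  have h32 : (3 : ℝ) / 2 = 1 / 2 + 1 := by norm_num
  have hlhs : A ^ ((3:ℝ)/2) * X * B ^ ((1:ℝ)/2) + A ^ ((1:ℝ)/2) * X * B ^ ((3:ℝ)/2)
      = A ^ (1 / 2 : ℝ) * (A * X + X * B) * B ^ (1 / 2 : ℝ) := by
    rw [h32, rpow_add_one_eq_rpow_mul hA (by norm_num), rpow_add_one_eq_rpow_mul hB (by norm_num),
      ((commute_rpow_self hB _).eq).symm]
    noncomm_ring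
  have hrhs : A ^ 2 * X + X * B ^ 2 + (2 : ℝ) • (A * X * B)
      = A * (A * X + X * B) + (A * X + X * B) * B := by
    rw [two_smul]; noncomm_ring
  rw [hlhs, hrhs]
  exact two_mul_norm_rpow_half_mul_mul_rpow_half_le hA hB _
end

section
/- For positive bounded operators A, B on a complex Hilbert space, a bounded operator X, and α ∈ [0, 1], the Heinz inequality ‖A^α X B^{1−α} + A^{1−α} X B^α‖ ≤ ‖AX + XB‖ holds, together with the refinement ‖A^α X B^{1−α} + A^{1−α} X B^α‖ ≤ (1/2)‖AX + XB‖ + (1/2)‖A^α X B^{1−α} + A^{1−α} X B^α‖ ≤ ‖AX + XB‖. -/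
/-!
On `[0, 1]` the function `t ↦ ‖A^t X B^(1-t) + A^(1-t) X B^t‖` is bounded, equals `‖AX + XB‖` at
both endpoints and is midpoint convex, so it never exceeds `‖AX + XB‖`; the refinement follows.

Midpoint convexity at `(r + s)/2` is the arithmetic-geometric mean inequality
`2‖PYQ‖ ≤ ‖P²Y + YQ²‖` for positive `P = A^δ`, `Q = B^δ` with `δ = (s - r)/2`. Perturbing `P`, `Q`
to invertible operators and passing to the Hermitian dilation `[[0, X], [X*, 0]]`, this becomes the
Corach–Porta–Recht inequality `2‖W‖ ≤ ‖SWS⁻¹ + S⁻¹WS‖` for self-adjoint `W` and invertible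
self-adjoint `S`. That one is obtained by testing `SWS⁻¹ + S⁻¹WS` against `S⁻¹u`, where `u` is an
approximate eigenvector of `W` for the eigenvalue `±‖W‖`.
-/

open ContinuousLinearMap
open scoped NNReal ComplexInnerProductSpace

theorem IsSelfAdjoint.of_mul_eq_one {R : Type*} [Monoid R] [StarMul R] {S S' : R}
    (hS : IsSelfAdjoint S) (hSS' : S * S' = 1) : IsSelfAdjoint S' := by
  refine left_inv_eq_right_inv ?_ hSS'
  rw [← hS.star_eq, ← star_mul, hSS', star_one]

namespace CFC

section

variable {A : Type*} [PartialOrder A] [Ring A] [StarRing A] [TopologicalSpace A]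
  [StarOrderedRing A] [Algebra ℝ A] [ContinuousFunctionalCalculus ℝ A IsSelfAdjoint]
  [NonnegSpectrumClass ℝ A]

lemma rpow_add_of_nonneg (a : A) {x y : ℝ} (hx : 0 ≤ x) (hy : 0 ≤ y) :
    a ^ (x + y) = a ^ x * a ^ y := by
  simp only [rpow_def]
  rw [← cfc_mul _ _ a (NNReal.continuous_rpow_const hx).continuousOn
    (NNReal.continuous_rpow_const hy).continuousOn]
  exact cfc_congr fun z _ => NNReal.rpow_add_of_nonneg z hx hy

end

lemma norm_rpow_le_max_one {A : Type*} [CStarAlgebra A] [PartialOrder A] [StarOrderedRing A]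
    (a : A) {t : ℝ} (ht₀ : 0 ≤ t) (ht₁ : t ≤ 1) : ‖a ^ t‖ ≤ max 1 ‖a‖ := by
  nontriviality A
  rw [rpow_def]
  have key : ‖cfc (fun x : ℝ≥0 => x ^ t) a‖₊ ≤ max 1 ‖a‖₊ := by
    refine nnnorm_cfc_nnreal_le fun x hx => ?_
    rcases le_total x 1 with h | h
    · exact le_max_of_le_left (NNReal.rpow_le_one h ht₀)
    · calc x ^ t ≤ x ^ (1 : ℝ) := NNReal.rpow_le_rpow_of_exponent_le h ht₁
        _ = x := NNReal.rpow_one x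
        _ ≤ _ := le_max_of_le_right (spectrum.le_nnnorm_of_mem hx)
  exact_mod_cast key

end CFC

theorem le_of_midpoint_le_of_bddAbove {f : ℝ → ℝ} {a b L : ℝ}
    (hbdd : BddAbove (f '' Set.Icc a b)) (ha : f a ≤ L) (hb : f b ≤ L)
    (hmid : ∀ r ∈ Set.Icc a b, ∀ s ∈ Set.Icc a b, r ≤ s → f ((r + s) / 2) ≤ (f r + f s) / 2)
    {t : ℝ} (ht : t ∈ Set.Icc a b) : f t ≤ L := by
  set M := sSup (f '' Set.Icc a b)
  have hM : ∀ t ∈ Set.Icc a b, f t ≤ M := fun t ht => le_csSup hbdd (Set.mem_image_of_mem f ht)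
  -- every point is the midpoint of an endpoint and a point of `[a, b]`, so `M ≤ (L + M) / 2`
  have hhalf : ∀ t ∈ Set.Icc a b, f t ≤ (L + M) / 2 := by
    rintro t ⟨hat, htb⟩
    rcases le_total t ((a + b) / 2) with h | h
    · have hs : 2 * t - a ∈ Set.Icc a b := ⟨by linarith, by linarith⟩
      have := hmid a ⟨le_rfl, by linarith⟩ (2 * t - a) hs (by linarith)
      rw [show (a + (2 * t - a)) / 2 = t by ring] at this
      linarith [hM _ hs]
    · have hr : 2 * t - b ∈ Set.Icc a b := ⟨by linarith, by linarith⟩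
      have := hmid (2 * t - b) hr b ⟨by linarith, le_rfl⟩ (by linarith)
      rw [show (2 * t - b + b) / 2 = t by ring] at this
      linarith [hM _ hr]
  have hML : M ≤ L := by
    have : M ≤ (L + M) / 2 :=
      csSup_le ⟨f t, t, ht, rfl⟩ (by rintro _ ⟨s, hs, rfl⟩; exact hhalf s hs)
    linarith
  exact (hM t ht).trans hML

theorem WithLp.prod_ext {p : ENNReal} {α β : Type*} {v w : WithLp p (α × β)}
    (h₁ : v.fst = w.fst) (h₂ : v.snd = w.snd) : v = w :=
  WithLp.ofLp_injective p (Prod.ext h₁ h₂)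

namespace HermitianDilation

variable {E : Type*} [NormedAddCommGroup E] [InnerProductSpace ℂ E]

local notation "E²" => WithLp 2 (E × E)

noncomputable def prodEquiv : E² ≃L[ℂ] E × E := WithLp.prodContinuousLinearEquiv 2 ℂ E E

noncomputable def blockDiag (S T : E →L[ℂ] E) : E² →L[ℂ] E² :=
  prodEquiv.symm.toContinuousLinearMap ∘L S.prodMap T ∘L prodEquiv.toContinuousLinearMap

@[simp] lemma blockDiag_apply_fst (S T : E →L[ℂ] E) (v : E²) :
    (blockDiag S T v).fst = S v.fst := rfl

@[simp] lemma blockDiag_apply_snd (S T : E →L[ℂ] E) (v : E²) :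
    (blockDiag S T v).snd = T v.snd := rfl

lemma blockDiag_mul_blockDiag (S T S' T' : E →L[ℂ] E) :
    blockDiag S T * blockDiag S' T' = blockDiag (S * S') (T * T') :=
  ext fun _ => WithLp.prod_ext rfl rfl

lemma blockDiag_one : blockDiag (1 : E →L[ℂ] E) 1 = 1 :=
  ext fun _ => WithLp.prod_ext rfl rfl

variable [CompleteSpace E]

noncomputable def dilation (X : E →L[ℂ] E) : E² →L[ℂ] E² :=
  prodEquiv.symm.toContinuousLinearMap ∘L (X ∘L snd ℂ E E).prod (adjoint X ∘L fst ℂ E E) ∘L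
    prodEquiv.toContinuousLinearMap

@[simp] lemma dilation_apply_fst (X : E →L[ℂ] E) (v : E²) : (dilation X v).fst = X v.snd := rfl

@[simp] lemma dilation_apply_snd (X : E →L[ℂ] E) (v : E²) :
    (dilation X v).snd = adjoint X v.fst := rfl

lemma isSelfAdjoint_blockDiag {S T : E →L[ℂ] E} (hS : IsSelfAdjoint S) (hT : IsSelfAdjoint T) :
    IsSelfAdjoint (blockDiag S T) := by
  refine isSelfAdjoint_iff_isSymmetric.mpr fun v w => ?_
  simp only [coe_coe, WithLp.prod_inner_apply, WithLp.ofLp_fst, WithLp.ofLp_snd,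
    blockDiag_apply_fst, blockDiag_apply_snd]
  congr 1
  exacts [hS.isSymmetric _ _, hT.isSymmetric _ _]

lemma isSelfAdjoint_dilation (X : E →L[ℂ] E) : IsSelfAdjoint (dilation X) := by
  refine isSelfAdjoint_iff_isSymmetric.mpr fun v w => ?_
  simp only [coe_coe, WithLp.prod_inner_apply, WithLp.ofLp_fst, WithLp.ofLp_snd,
    dilation_apply_fst, dilation_apply_snd, adjoint_inner_left, adjoint_inner_right]
  exact add_comm _ _

lemma norm_dilation (X : E →L[ℂ] E) : ‖dilation X‖ = ‖X‖ := by
  refine le_antisymm (opNorm_le_bound _ (norm_nonneg X) fun v => ?_)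
    (opNorm_le_bound _ (norm_nonneg _) fun y => ?_)
  · have h₁ := X.le_opNorm v.snd
    have h₂ : ‖adjoint X v.fst‖ ≤ ‖X‖ * ‖v.fst‖ := by
      simpa using (adjoint X).le_opNorm v.fst
    refine (sq_le_sq₀ (norm_nonneg _) (by positivity)).mp ?_
    rw [mul_pow, WithLp.prod_norm_sq_eq_of_L2, WithLp.prod_norm_sq_eq_of_L2, dilation_apply_fst,
      dilation_apply_snd]
    nlinarith [pow_le_pow_left₀ (norm_nonneg _) h₁ 2, pow_le_pow_left₀ (norm_nonneg _) h₂ 2]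
  · simpa [WithLp.prod_norm_eq_of_L2] using (dilation X).le_opNorm (WithLp.toLp 2 (0, y))

lemma blockDiag_mul_dilation_mul_blockDiag_add {S T S' T' : E →L[ℂ] E} (hS : IsSelfAdjoint S)
    (hT : IsSelfAdjoint T) (hS' : IsSelfAdjoint S') (hT' : IsSelfAdjoint T') (X : E →L[ℂ] E) :
    blockDiag S T * dilation X * blockDiag S' T' + blockDiag S' T' * dilation X * blockDiag S T =
      dilation (S * X * T' + S' * X * T) := by
  have hadj : adjoint (S * X * T' + S' * X * T) = T * adjoint X * S' + T' * adjoint X * S := by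
    simp only [← star_eq_adjoint, star_add, star_mul, hS.star_eq, hT.star_eq, hS'.star_eq,
      hT'.star_eq, mul_assoc, add_comm]
  refine ext fun v => WithLp.prod_ext ?_ ?_
  · simp
  · simp [hadj]

end HermitianDilation

variable {H : Type*} [NormedAddCommGroup H] [InnerProductSpace ℂ H] [CompleteSpace H]

theorem IsSelfAdjoint.exists_approx_eigenvector [Nontrivial H] {W : H →L[ℂ] H}
    (hW : IsSelfAdjoint W) {δ : ℝ} (hδ : 0 < δ) :
    ∃ (u : H) (μ : ℝ), ‖u‖ = 1 ∧ |μ| = ‖W‖ ∧ ‖W u - (μ : ℂ) • u‖ ≤ δ := by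
  rcases (norm_nonneg W).eq_or_lt with hW0 | hWpos
  · obtain ⟨v, hv⟩ := exists_norm_eq H zero_le_one
    refine ⟨v, 0, hv, by simp [← hW0], ?_⟩
    simp [norm_eq_zero.mp hW0.symm, hδ.le]
  set m := ‖W‖
  -- a unit vector whose Rayleigh quotient is `ε`-close to `±‖W‖` is a `√(2‖W‖ε)`-approximate
  -- eigenvector
  set ε := min (δ ^ 2 / (2 * m)) m
  have hε : 0 < ε := by positivity
  obtain ⟨x, hx⟩ : ∃ x, m - ε < |W.rayleighQuotient x| := by
    apply exists_lt_of_lt_ciSup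
    rw [← W.norm_eq_iSup_rayleighQuotient hW.isSymmetric]
    linarith
  have hx0 : x ≠ 0 := by
    rintro rfl
    simp only [rayleighQuotient_apply_zero, abs_zero] at hx
    linarith [min_le_right (δ ^ 2 / (2 * m)) m]
  obtain ⟨μ, hμ, hμx⟩ :
      ∃ μ : ℝ, |μ| = m ∧ μ * W.rayleighQuotient x = m * |W.rayleighQuotient x| := by
    rcases le_total 0 (W.rayleighQuotient x) with h | h
    · exact ⟨m, abs_of_pos hWpos, by rw [abs_of_nonneg h]⟩
    · exact ⟨-m, by simp [abs_of_pos hWpos], by rw [abs_of_nonpos h]; ring⟩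
  set u := ((‖x‖⁻¹ : ℝ) : ℂ) • x
  have hu : ‖u‖ = 1 := by
    simp [u, norm_smul, norm_ne_zero_iff.mpr hx0]
  have hre : RCLike.re ⟪W u, u⟫ = W.rayleighQuotient x := by
    rw [← W.rayleigh_smul x (c := ((‖x‖⁻¹ : ℝ) : ℂ)) (by simpa using hx0)]
    change _ = W.rayleighQuotient u
    rw [rayleighQuotient, reApplyInnerSelf_apply, hu, one_pow, div_one]
  refine ⟨u, μ, hu, hμ, ?_⟩
  have hsq : ‖W u - (μ : ℂ) • u‖ ^ 2 ≤ δ ^ 2 := by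
    have hWu : ‖W u‖ ≤ m := by simpa [hu] using W.le_opNorm u
    rw [norm_sub_sq (𝕜 := ℂ), inner_smul_right, RCLike.re_to_complex, Complex.re_ofReal_mul,
      ← RCLike.re_to_complex, hre, norm_smul, hu,
      Complex.norm_real, Real.norm_eq_abs, hμ, hμx]
    have : ε ≤ δ ^ 2 / (2 * m) := min_le_left _ _
    rw [le_div_iff₀ (by positivity)] at this
    nlinarith [mul_lt_mul_of_pos_left hx hWpos, pow_le_pow_left₀ (norm_nonneg _) hWu 2]
  exact pow_le_pow_iff_left₀ (norm_nonneg _) hδ.le two_ne_zero |>.mp hsq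

theorem IsSelfAdjoint.re_inner_conj_add_apply {W S S' : H →L[ℂ] H} (hW : IsSelfAdjoint W)
    (hS : IsSelfAdjoint S) (hSS' : S * S' = 1) (u : H) :
    RCLike.re ⟪(S * W * S' + S' * W * S) (S' u), S' u⟫ = 2 * RCLike.re ⟪W u, S' (S' u)⟫ := by
  have hSw : S (S' u) = u := by simpa using DFunLike.congr_fun hSS' u
  have sS : ∀ a b : H, ⟪S a, b⟫ = ⟪a, S b⟫ := hS.isSymmetric
  have sS' : ∀ a b : H, ⟪S' a, b⟫ = ⟪a, S' b⟫ := (hS.of_mul_eq_one hSS').isSymmetric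
  have sW : ∀ a b : H, ⟪W a, b⟫ = ⟪a, W b⟫ := hW.isSymmetric
  simp only [add_apply, mul_apply_eq_comp, inner_add_left, sS _ (S' u), sS' _ (S' u),
    hSw, sW _ u]
  rw [← inner_conj_symm (S' (S' u)), add_comm, RCLike.add_conj]
  simp

theorem IsSelfAdjoint.two_mul_norm_le_norm_conj_add {W S S' : H →L[ℂ] H} (hW : IsSelfAdjoint W)
    (hS : IsSelfAdjoint S) (hSS' : S * S' = 1) :
    2 * ‖W‖ ≤ ‖S * W * S' + S' * W * S‖ := by
  nontriviality H
  have hS' := hS.of_mul_eq_one hSS'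
  set Φ := S * W * S' + S' * W * S
  refine le_of_forall_pos_le_add fun η hη => ?_
  set δ := η / (2 * ‖S‖ * ‖S'‖ + 1)
  have hδη : 2 * ‖S‖ * ‖S'‖ * δ ≤ η := by
    rw [mul_div_assoc', div_le_iff₀ (by positivity)]
    nlinarith
  obtain ⟨u, μ, hu, hμ, hr⟩ := hW.exists_approx_eigenvector (show 0 < δ by positivity)
  set w := S' u
  have hw : 1 ≤ ‖S‖ * ‖w‖ := by
    have hSw : S w = u := by simpa using DFunLike.congr_fun hSS' u
    simpa [hSw, hu] using S.le_opNorm w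
  set r := W u - (μ : ℂ) • u
  -- `re ⟪Φ w, w⟫ ≈ 2μ‖w‖²`, hence `‖Φ‖ ≳ 2|μ| = 2‖W‖`
  have hΦw : RCLike.re ⟪Φ w, w⟫ = 2 * (μ * ‖w‖ ^ 2 + RCLike.re ⟪r, S' w⟫) := by
    have hu' : ⟪u, S' w⟫ = (‖w‖ : ℂ) ^ 2 :=
      (hS'.isSymmetric u w).symm.trans (inner_self_eq_norm_sq_to_K w)
    have h2 : ⟪W u, S' w⟫ = ⟪r, S' w⟫ + μ * (‖w‖ : ℂ) ^ 2 := by simp [r, hu']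
    rw [hW.re_inner_conj_add_apply hS hSS' u, h2]
    simp [← Complex.ofReal_pow, add_comm]
  have hΦ : |RCLike.re ⟪Φ w, w⟫| ≤ ‖Φ‖ * ‖w‖ ^ 2 :=
    calc |RCLike.re ⟪Φ w, w⟫| ≤ ‖Φ w‖ * ‖w‖ :=
          (RCLike.abs_re_le_norm _).trans (norm_inner_le_norm _ _)
      _ ≤ ‖Φ‖ * ‖w‖ * ‖w‖ := by gcongr; exact Φ.le_opNorm w
      _ = ‖Φ‖ * ‖w‖ ^ 2 := by ring
  have hrw : |RCLike.re ⟪r, S' w⟫| ≤ δ * (‖S'‖ * ‖w‖) :=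
    calc |RCLike.re ⟪r, S' w⟫| ≤ ‖r‖ * ‖S' w‖ :=
          (RCLike.abs_re_le_norm _).trans (norm_inner_le_norm _ _)
      _ ≤ δ * (‖S'‖ * ‖w‖) := by gcongr; exact S'.le_opNorm w
  have hw0 : 0 < ‖w‖ := by
    by_contra! h
    nlinarith [norm_nonneg w, norm_nonneg S]
  have key : (2 * ‖W‖ - ‖Φ‖) * ‖w‖ ≤ 2 * δ * ‖S'‖ := by
    have : 2 * |μ| * ‖w‖ ^ 2 ≤ ‖Φ‖ * ‖w‖ ^ 2 + 2 * δ * ‖S'‖ * ‖w‖ := by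
      rcases abs_cases μ with ⟨h, -⟩ | ⟨h, -⟩ <;> rw [h] <;>
        linarith [abs_le.mp hΦ, abs_le.mp hrw]
    rw [hμ] at this
    nlinarith
  nlinarith [norm_nonneg S]

open HermitianDilation in
theorem two_mul_norm_le_norm_mul_mul_add {S T S' T' : H →L[ℂ] H} (hS : IsSelfAdjoint S)
    (hT : IsSelfAdjoint T) (hSS' : S * S' = 1) (hTT' : T * T' = 1) (X : H →L[ℂ] H) :
    2 * ‖X‖ ≤ ‖S * X * T' + S' * X * T‖ := by
  have h := (isSelfAdjoint_dilation X).two_mul_norm_le_norm_conj_add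
    (isSelfAdjoint_blockDiag hS hT) (S' := blockDiag S' T')
    (by rw [blockDiag_mul_blockDiag, hSS', hTT', blockDiag_one])
  rwa [blockDiag_mul_dilation_mul_blockDiag_add hS hT (hS.of_mul_eq_one hSS')
    (hT.of_mul_eq_one hTT'), norm_dilation, norm_dilation] at h

theorem two_mul_norm_mul_mul_le_of_isStrictlyPositive {S T : H →L[ℂ] H}
    (hS : IsStrictlyPositive S) (hT : IsStrictlyPositive T) (Y : H →L[ℂ] H) :
    2 * ‖S * Y * T‖ ≤ ‖S * S * Y + Y * (T * T)‖ := by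
  have h := two_mul_norm_le_norm_mul_mul_add hS.isSelfAdjoint hT.isSelfAdjoint
    (Ring.mul_inverse_cancel S hS.isUnit) (Ring.mul_inverse_cancel T hT.isUnit) (S * Y * T)
  simpa only [mul_assoc, Ring.mul_inverse_cancel_right _ _ hT.isUnit,
    Ring.inverse_mul_cancel_left _ _ hS.isUnit] using h

theorem two_mul_norm_mul_mul_le_of_nonneg {P Q : H →L[ℂ] H} (hP : 0 ≤ P) (hQ : 0 ≤ Q)
    (Y : H →L[ℂ] H) : 2 * ‖P * Y * Q‖ ≤ ‖P * P * Y + Y * (Q * Q)‖ := by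
  -- `P + ε`, `Q + ε` are invertible, and the inequality survives `ε → 0⁺` as it defines a closed set
  let c : ℝ → H →L[ℂ] H := algebraMap ℝ _
  have hpos : ∀ ε ∈ Set.Ioi (0 : ℝ), 2 * ‖(P + c ε) * Y * (Q + c ε)‖ ≤
      ‖(P + c ε) * (P + c ε) * Y + Y * ((Q + c ε) * (Q + c ε))‖ := fun ε hε =>
    two_mul_norm_mul_mul_le_of_isStrictlyPositive
      (.nonneg_add hP (isStrictlyPositive_algebraMap hε))
      (.nonneg_add hQ (isStrictlyPositive_algebraMap hε)) Y
  have hclosed : IsClosed {ε | 2 * ‖(P + c ε) * Y * (Q + c ε)‖ ≤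
      ‖(P + c ε) * (P + c ε) * Y + Y * ((Q + c ε) * (Q + c ε))‖} :=
    isClosed_le (by fun_prop) (by fun_prop)
  have := hclosed.closure_subset_iff.mpr hpos (by rw [closure_Ioi]; exact Set.self_mem_Ici)
  simpa [c] using this

section Heinz

variable (A B X : H →L[ℂ] H)

noncomputable def heinzSum (x y : ℝ) : H →L[ℂ] H := A ^ x * X * B ^ y + A ^ y * X * B ^ x

variable {A B X}

open CFC in
lemma rpow_mul_heinzSum_mul_rpow {a x y : ℝ} (ha : 0 ≤ a) (hx : 0 ≤ x) (hy : 0 ≤ y) :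
    A ^ a * heinzSum A B X x y * B ^ a = heinzSum A B X (a + x) (a + y) := by
  have hB : ∀ z, 0 ≤ z → B ^ (a + z) = B ^ z * B ^ a := fun z hz => by
    rw [add_comm, rpow_add_of_nonneg B hz ha]
  simp only [heinzSum, rpow_add_of_nonneg A ha hx, rpow_add_of_nonneg A ha hy, hB x hx, hB y hy]
  noncomm_ring

open CFC in
lemma rpow_mul_heinzSum_add_heinzSum_mul_rpow {a x y : ℝ} (ha : 0 ≤ a) (hx : 0 ≤ x)
    (hy : 0 ≤ y) :
    A ^ a * heinzSum A B X x y + heinzSum A B X x y * B ^ a =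
      heinzSum A B X (a + x) y + heinzSum A B X x (a + y) := by
  have hB : ∀ z, 0 ≤ z → B ^ (a + z) = B ^ z * B ^ a := fun z hz => by
    rw [add_comm, rpow_add_of_nonneg B hz ha]
  simp only [heinzSum, rpow_add_of_nonneg A ha hx, rpow_add_of_nonneg A ha hy, hB x hx, hB y hy]
  noncomm_ring

lemma norm_heinzSum_le_max_one {x y : ℝ} (hx : x ∈ Set.Icc (0 : ℝ) 1)
    (hy : y ∈ Set.Icc (0 : ℝ) 1) :
    ‖heinzSum A B X x y‖ ≤ 2 * (max 1 ‖A‖ * ‖X‖ * max 1 ‖B‖) := by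
  have h : ∀ x y : ℝ, x ∈ Set.Icc (0 : ℝ) 1 → y ∈ Set.Icc (0 : ℝ) 1 →
      ‖A ^ x * X * B ^ y‖ ≤ max 1 ‖A‖ * ‖X‖ * max 1 ‖B‖ := fun x y hx hy =>
    norm_mul₃_le.trans (by gcongr <;> apply CFC.norm_rpow_le_max_one <;> simp_all)
  exact (norm_add_le _ _).trans (by linarith [h x y hx hy, h y x hy hx])

open CFC in
lemma norm_heinzSum_midpoint_le {r s : ℝ} (hr : 0 ≤ r) (hrs : r ≤ s) (hs : s ≤ 1) :
    ‖heinzSum A B X ((r + s) / 2) (1 - (r + s) / 2)‖ ≤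
      (‖heinzSum A B X r (1 - r)‖ + ‖heinzSum A B X s (1 - s)‖) / 2 := by
  set δ := (s - r) / 2
  have hδ : 0 ≤ δ := div_nonneg (by linarith) zero_le_two
  have hs' : 0 ≤ 1 - s := by linarith
  set Y := heinzSum A B X r (1 - s)
  have hPYQ : A ^ δ * Y * B ^ δ = heinzSum A B X ((r + s) / 2) (1 - (r + s) / 2) := by
    rw [rpow_mul_heinzSum_mul_rpow hδ hr hs', show δ + r = (r + s) / 2 by ring,
      show δ + (1 - s) = 1 - (r + s) / 2 by ring]
  have hPPY : A ^ δ * A ^ δ * Y + Y * (B ^ δ * B ^ δ) =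
      heinzSum A B X s (1 - s) + heinzSum A B X r (1 - r) := by
    rw [← rpow_add_of_nonneg A hδ hδ, ← rpow_add_of_nonneg B hδ hδ,
      rpow_mul_heinzSum_add_heinzSum_mul_rpow (by positivity) hr hs', show δ + δ + r = s by ring,
      show δ + δ + (1 - s) = 1 - r by ring]
  have h := two_mul_norm_mul_mul_le_of_nonneg (rpow_nonneg (a := A) (y := δ))
    (rpow_nonneg (a := B) (y := δ)) Y
  rw [hPYQ, hPPY] at h
  linarith [norm_add_le (heinzSum A B X s (1 - s)) (heinzSum A B X r (1 - r))]

theorem norm_heinzSum_le (hA : 0 ≤ A) (hB : 0 ≤ B) {t : ℝ} (ht : t ∈ Set.Icc (0 : ℝ) 1) :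
    ‖heinzSum A B X t (1 - t)‖ ≤ ‖A * X + X * B‖ := by
  refine le_of_midpoint_le_of_bddAbove (f := fun t => ‖heinzSum A B X t (1 - t)‖) ?_ ?_ ?_ ?_ ht
  · refine ⟨2 * (max 1 ‖A‖ * ‖X‖ * max 1 ‖B‖), ?_⟩
    rintro _ ⟨t, ⟨ht₀, ht₁⟩, rfl⟩
    exact norm_heinzSum_le_max_one ⟨ht₀, ht₁⟩ ⟨by linarith, by linarith⟩
  · simp [heinzSum, CFC.rpow_zero A, CFC.rpow_one A, CFC.rpow_zero B, CFC.rpow_one B, add_comm]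
  · simp [heinzSum, CFC.rpow_zero A, CFC.rpow_one A, CFC.rpow_zero B, CFC.rpow_one B]
  · rintro r ⟨hr, -⟩ s ⟨-, hs⟩ hrs
    exact norm_heinzSum_midpoint_le hr hrs hs

end Heinz

theorem stmt10 (A B : H →L[ℂ] H) (hA : 0 ≤ A) (hB : 0 ≤ B) (X : H →L[ℂ] H)
    (α : ℝ) (hα : α ∈ Set.Icc (0 : ℝ) 1) :
    ‖A ^ α * X * B ^ (1 - α) + A ^ (1 - α) * X * B ^ α‖ ≤
        (1/2) * ‖A * X + X * B‖ +
          (1/2) * ‖A ^ α * X * B ^ (1 - α) + A ^ (1 - α) * X * B ^ α‖ ∧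
      (1/2) * ‖A * X + X * B‖ +
          (1/2) * ‖A ^ α * X * B ^ (1 - α) + A ^ (1 - α) * X * B ^ α‖ ≤
        ‖A * X + X * B‖ := by
  have h : ‖A ^ α * X * B ^ (1 - α) + A ^ (1 - α) * X * B ^ α‖ ≤ ‖A * X + X * B‖ :=
    norm_heinzSum_le hA hB hα
  constructor <;> linarith
end

section
/- Let k ≥ 0, and let S be an invertible bounded operator on a complex Hilbert space such that ‖S X S⁻¹ + S⁻¹ X S + kX‖ ≥ (k+2)‖X‖ for all bounded operators X. If moreover S is self-adjoint, then for all λ, μ in the spectrum of S one has |λ/μ + μ/λ + k| ≥ k + 2. -/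
/-! A real point `t` of the spectrum of a self-adjoint operator is an approximate eigenvalue: a
self-adjoint operator that is bounded below has closed range whose orthogonal complement is its
kernel, so it is invertible. Hence for `a, b ∈ σ(S)` there are unit vectors `x, y` with `S x ≈ a x`
and `S y ≈ b y`, and then also `S⁻¹ x ≈ a⁻¹ x`, `S⁻¹ y ≈ b⁻¹ y`. The rank-one operator
`X = ⟪y, ·⟫ x` has norm one and satisfies `S X S⁻¹ ≈ (a/b) X` and `S⁻¹ X S ≈ (b/a) X`, so the
hypothesis applied to `X` gives `k + 2 ≤ |a/b + b/a + k| + ε` for every `ε > 0`. -/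

open ContinuousLinearMap InnerProductSpace

theorem IsSelfAdjoint.val_inv {R : Type*} [Monoid R] [StarMul R] {u : Rˣ}
    (hu : IsSelfAdjoint (u : R)) : IsSelfAdjoint (↑u⁻¹ : R) := by
  have : star u = u := Units.ext (by rw [Units.coe_star, hu.star_eq])
  rw [IsSelfAdjoint, ← Units.coe_star_inv, this]

theorem ContinuousLinearMap.norm_inv_apply_sub_smul_le {𝕜 E : Type*} [NontriviallyNormedField 𝕜]
    [NormedAddCommGroup E] [NormedSpace 𝕜 E] (S : (E →L[𝕜] E)ˣ) {a : 𝕜} (ha : a ≠ 0) (x : E) :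
    ‖(↑S⁻¹ : E →L[𝕜] E) x - a⁻¹ • x‖ ≤
      ‖a‖⁻¹ * ‖(↑S⁻¹ : E →L[𝕜] E)‖ * ‖(S : E →L[𝕜] E) x - a • x‖ := by
  have hSS : (↑S⁻¹ : E →L[𝕜] E) ((S : E →L[𝕜] E) x) = x := by
    rw [← mul_apply_eq_comp, Units.inv_mul, one_apply_eq_self]
  have key : (↑S⁻¹ : E →L[𝕜] E) x - a⁻¹ • x =
      -a⁻¹ • (↑S⁻¹ : E →L[𝕜] E) ((S : E →L[𝕜] E) x - a • x) := by
    rw [map_sub, map_smul, hSS, smul_sub, smul_smul, neg_mul, inv_mul_cancel₀ ha]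
    module
  rw [key, norm_smul, norm_neg, norm_inv, mul_assoc]
  gcongr
  exact le_opNorm _ _

section

variable {𝕜 E F : Type*} [RCLike 𝕜] [NormedAddCommGroup E] [InnerProductSpace 𝕜 E]
  [NormedAddCommGroup F] [InnerProductSpace 𝕜 F]

theorem InnerProductSpace.norm_rankOne_sub_rankOne_le (x x' : E) (y y' : F) :
    ‖rankOne 𝕜 x y - rankOne 𝕜 x' y'‖ ≤ ‖x - x'‖ * ‖y‖ + ‖x'‖ * ‖y - y'‖ := by
  have : rankOne 𝕜 x y - rankOne 𝕜 x' y' = rankOne 𝕜 (x - x') y + rankOne 𝕜 x' (y - y') := by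
    simp only [map_sub, sub_apply]
    abel
  rw [this, ← norm_rankOne (𝕜 := 𝕜), ← norm_rankOne (𝕜 := 𝕜)]
  exact norm_add_le _ _

variable [CompleteSpace E]

theorem InnerProductSpace.mul_rankOne_mul (P Q : E →L[𝕜] E) (x y : E) :
    P * rankOne 𝕜 x y * Q = rankOne 𝕜 (P x) (adjoint Q y) := by
  rw [mul_def, mul_def, comp_rankOne, rankOne_comp]

theorem InnerProductSpace.norm_mul_rankOne_mul_sub_smul_le {P Q : E →L[𝕜] E}
    (hQ : IsSelfAdjoint Q) {x y : E} (hx : ‖x‖ = 1) (hy : ‖y‖ = 1) (α β : 𝕜) :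
    ‖P * rankOne 𝕜 x y * Q - (α * starRingEnd 𝕜 β) • rankOne 𝕜 x y‖ ≤
      ‖P x - α • x‖ * ‖Q‖ + ‖α‖ * ‖Q y - β • y‖ := by
  have hsmul : (α * starRingEnd 𝕜 β) • rankOne 𝕜 x y = rankOne 𝕜 (α • x) (β • y) := by
    simp only [map_smul, map_smulₛₗ, smul_apply, smul_smul, mul_comm]
  rw [mul_rankOne_mul, hQ.adjoint_eq, hsmul]
  refine (norm_rankOne_sub_rankOne_le _ _ _ _).trans ?_
  rw [norm_smul, hx, mul_one]
  gcongr
  simpa [hy] using Q.le_opNorm y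

theorem IsSelfAdjoint.isUnit_of_antilipschitz {A : E →L[𝕜] E} (hA : IsSelfAdjoint A)
    {K : NNReal} (hK : AntilipschitzWith K A) : IsUnit A := by
  rw [isUnit_iff_bijective, bijective_iff_dense_range_and_antilipschitz,
    Submodule.topologicalClosure_eq_top_iff, orthogonal_range, hA.adjoint_eq]
  exact ⟨LinearMap.ker_eq_bot.mpr hK.injective, K, hK⟩

theorem IsSelfAdjoint.exists_norm_sub_smul_lt {T : E →L[𝕜] E} (hT : IsSelfAdjoint T) {t : ℝ}
    (ht : (t : 𝕜) ∈ spectrum 𝕜 T) {ε : ℝ} (hε : 0 < ε) :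
    ∃ x, ‖x‖ = 1 ∧ ‖T x - (t : 𝕜) • x‖ < ε := by
  by_contra! h
  refine spectrum.mem_iff.mp ht (isUnit_of_antilipschitz (K := ⟨ε⁻¹, by positivity⟩)
    ((IsSelfAdjoint.algebraMap _ (RCLike.conj_ofReal t)).sub hT) ?_)
  refine antilipschitz_of_bound_of_norm_one _ fun x hx => ?_
  change 1 ≤ ε⁻¹ * _
  rw [sub_apply, ContinuousLinearMap.algebraMap_apply, norm_sub_rev, ← div_eq_inv_mul,
    one_le_div hε]
  exact h x hx

theorem IsSelfAdjoint.exists_approx_eigenvector_and_inv {S : (E →L[𝕜] E)ˣ}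
    (hS : IsSelfAdjoint (S : E →L[𝕜] E)) {a : ℝ} (ha : (a : 𝕜) ∈ spectrum 𝕜 (S : E →L[𝕜] E))
    {ε : ℝ} (hε : 0 < ε) :
    ∃ x, ‖x‖ = 1 ∧ ‖(S : E →L[𝕜] E) x - (a : 𝕜) • x‖ ≤ ε ∧
      ‖(↑S⁻¹ : E →L[𝕜] E) x - (a : 𝕜)⁻¹ • x‖ ≤ ε := by
  set M := ‖(a : 𝕜)‖⁻¹ * ‖(↑S⁻¹ : E →L[𝕜] E)‖
  have hM : 0 ≤ M := by positivity
  obtain ⟨x, hx, hSx⟩ := hS.exists_norm_sub_smul_lt ha (ε := ε / (1 + M)) (by positivity)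
  refine ⟨x, hx, hSx.le.trans (div_le_self hε.le (by linarith)),
    (norm_inv_apply_sub_smul_le S (ne_of_mem_of_not_mem ha (spectrum.zero_notMem 𝕜 S.isUnit))
      x).trans ?_⟩
  calc M * ‖(S : E →L[𝕜] E) x - (a : 𝕜) • x‖ ≤ M * (ε / (1 + M)) := by gcongr
    _ ≤ ε := by
      rw [mul_div_assoc', div_le_iff₀ (by positivity)]
      nlinarith

theorem IsSelfAdjoint.exists_norm_conj_sub_smul_le {S : (E →L[𝕜] E)ˣ}
    (hS : IsSelfAdjoint (S : E →L[𝕜] E)) {a b : ℝ} (ha : (a : 𝕜) ∈ spectrum 𝕜 (S : E →L[𝕜] E))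
    (hb : (b : 𝕜) ∈ spectrum 𝕜 (S : E →L[𝕜] E)) {δ : ℝ} (hδ : 0 < δ) :
    ∃ X : E →L[𝕜] E, ‖X‖ = 1 ∧
      ‖(S : E →L[𝕜] E) * X * (↑S⁻¹ : E →L[𝕜] E) - ((a : 𝕜) / b) • X‖ ≤ δ ∧
      ‖(↑S⁻¹ : E →L[𝕜] E) * X * (S : E →L[𝕜] E) - ((b : 𝕜) / a) • X‖ ≤ δ := by
  set C := ‖(S : E →L[𝕜] E)‖ + ‖(↑S⁻¹ : E →L[𝕜] E)‖ + ‖(a : 𝕜)‖ + ‖(a : 𝕜)‖⁻¹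
  have hC : 0 < C := by
    have : 0 < ‖(a : 𝕜)‖ :=
      norm_pos_iff.mpr (ne_of_mem_of_not_mem ha (spectrum.zero_notMem 𝕜 S.isUnit))
    positivity
  obtain ⟨x, hx, hx₁, hx₂⟩ := hS.exists_approx_eigenvector_and_inv ha (div_pos hδ hC)
  obtain ⟨y, hy, hy₁, hy₂⟩ := hS.exists_approx_eigenvector_and_inv hb (div_pos hδ hC)
  have hδC : δ / C * C = δ := div_mul_cancel₀ δ hC.ne'
  refine ⟨rankOne 𝕜 x y, by rw [norm_rankOne, hx, hy, mul_one], ?_, ?_⟩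
  · have := norm_mul_rankOne_mul_sub_smul_le (P := S) hS.val_inv hx hy (a : 𝕜) (b : 𝕜)⁻¹
    rw [map_inv₀, RCLike.conj_ofReal, ← div_eq_mul_inv] at this
    calc _ ≤ _ := this
      _ ≤ δ / C * ‖(↑S⁻¹ : E →L[𝕜] E)‖ + ‖(a : 𝕜)‖ * (δ / C) := by gcongr
      _ = δ / C * (‖(↑S⁻¹ : E →L[𝕜] E)‖ + ‖(a : 𝕜)‖) := by ring
      _ ≤ δ / C * C := by
        gcongr
        linarith [norm_nonneg (S : E →L[𝕜] E), inv_nonneg.mpr (norm_nonneg (a : 𝕜))]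
      _ = δ := hδC
  · have := norm_mul_rankOne_mul_sub_smul_le (P := ↑S⁻¹) hS hx hy (a : 𝕜)⁻¹ (b : 𝕜)
    rw [RCLike.conj_ofReal, inv_mul_eq_div] at this
    calc _ ≤ _ := this
      _ ≤ δ / C * ‖(S : E →L[𝕜] E)‖ + ‖(a : 𝕜)⁻¹‖ * (δ / C) := by gcongr
      _ = δ / C * (‖(S : E →L[𝕜] E)‖ + ‖(a : 𝕜)‖⁻¹) := by rw [norm_inv]; ring
      _ ≤ δ / C * C := by
        gcongr
        linarith [norm_nonneg (↑S⁻¹ : E →L[𝕜] E), norm_nonneg (a : 𝕜)]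
      _ = δ := hδC

end

variable {H : Type*} [NormedAddCommGroup H] [InnerProductSpace ℂ H] [CompleteSpace H]

theorem stmt11_general (k : ℝ) (S : (H →L[ℂ] H)ˣ)
    (hS : IsSelfAdjoint (S : H →L[ℂ] H))
    (h : ∀ X : H →L[ℂ] H,
      (k + 2) * ‖X‖ ≤ ‖(S : H →L[ℂ] H) * X * (↑S⁻¹ : H →L[ℂ] H) +
        (↑S⁻¹ : H →L[ℂ] H) * X * (S : H →L[ℂ] H) + k • X‖) :
    ∀ l m : ℂ, l ∈ spectrum ℂ (S : H →L[ℂ] H) → m ∈ spectrum ℂ (S : H →L[ℂ] H) →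
      k + 2 ≤ ‖l / m + m / l + k‖ := by
  intro l m hl hm
  obtain ⟨a, rfl⟩ : ∃ a : ℝ, l = a := ⟨_, hS.mem_spectrum_eq_re hl⟩
  obtain ⟨b, rfl⟩ : ∃ b : ℝ, m = b := ⟨_, hS.mem_spectrum_eq_re hm⟩
  refine le_of_forall_pos_le_add fun ε hε => ?_
  obtain ⟨X, hX, h₁, h₂⟩ := hS.exists_norm_conj_sub_smul_le hl hm (half_pos hε)
  set c : ℂ := (a : ℂ) / b + (b : ℂ) / a + k
  have hdecomp : (S : H →L[ℂ] H) * X * (↑S⁻¹ : H →L[ℂ] H) +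
      (↑S⁻¹ : H →L[ℂ] H) * X * (S : H →L[ℂ] H) + k • X =
      c • X + ((S : H →L[ℂ] H) * X * (↑S⁻¹ : H →L[ℂ] H) - ((a : ℂ) / b) • X) +
        ((↑S⁻¹ : H →L[ℂ] H) * X * (S : H →L[ℂ] H) - ((b : ℂ) / a) • X) := by
    simp only [c, add_smul, ← Complex.coe_smul]
    abel
  calc k + 2 = (k + 2) * ‖X‖ := by rw [hX, mul_one]
    _ ≤ _ := h X
    _ ≤ ‖c‖ + ε / 2 + ε / 2 := by
      rw [hdecomp]
      refine norm_add₃_le.trans ?_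
      rw [norm_smul, hX, mul_one]
      exact add_le_add_three le_rfl h₁ h₂
    _ = ‖c‖ + ε := by ring

theorem stmt11 (k : ℝ) (hk : 0 ≤ k) (S : (H →L[ℂ] H)ˣ)
    (hS : IsSelfAdjoint (S : H →L[ℂ] H))
    (h : ∀ X : H →L[ℂ] H,
      (k + 2) * ‖X‖ ≤ ‖(S : H →L[ℂ] H) * X * (↑S⁻¹ : H →L[ℂ] H) +
        (↑S⁻¹ : H →L[ℂ] H) * X * (S : H →L[ℂ] H) + k • X‖) :
    ∀ l m : ℂ, l ∈ spectrum ℂ (S : H →L[ℂ] H) → m ∈ spectrum ℂ (S : H →L[ℂ] H) →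
      k + 2 ≤ ‖l / m + m / l + k‖ :=
  stmt11_general k S hS h
end

section
/- Let k ≥ t be real numbers and S an invertible bounded operator on a complex Hilbert space. If ‖S X S⁻¹ + S⁻¹ X S + kX‖ ≥ (k+2)‖X‖ for all bounded X, then ‖S X S⁻¹ + S⁻¹ X S + tX‖ ≥ (t+2)‖X‖ for all bounded X. -/
open ContinuousLinearMap

variable {H : Type*} [NormedAddCommGroup H] [InnerProductSpace ℂ H] [CompleteSpace H]

theorem stmt12 (k t : ℝ) (hkt : t ≤ k) (S : (H →L[ℂ] H)ˣ)
    (h : ∀ X : H →L[ℂ] H,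
      (k + 2) * ‖X‖ ≤ ‖(S : H →L[ℂ] H) * X * (↑S⁻¹ : H →L[ℂ] H) +
        (↑S⁻¹ : H →L[ℂ] H) * X * (S : H →L[ℂ] H) + k • X‖) :
    ∀ X : H →L[ℂ] H,
      (t + 2) * ‖X‖ ≤ ‖(S : H →L[ℂ] H) * X * (↑S⁻¹ : H →L[ℂ] H) +
        (↑S⁻¹ : H →L[ℂ] H) * X * (S : H →L[ℂ] H) + t • X‖ := by
  intro X
  set A : H →L[ℂ] H := (S : H →L[ℂ] H) * X * (↑S⁻¹ : H →L[ℂ] H) +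
      (↑S⁻¹ : H →L[ℂ] H) * X * (S : H →L[ℂ] H) with hA
  have hk := h X
  have key : A + k • X = (A + t • X) + (k - t) • X := by
    rw [sub_smul]; abel
  have htri : ‖A + k • X‖ ≤ ‖A + t • X‖ + (k - t) * ‖X‖ := by
    calc ‖A + k • X‖ = ‖(A + t • X) + (k - t) • X‖ := by rw [key]
      _ ≤ ‖A + t • X‖ + ‖(k - t) • X‖ := norm_add_le _ _
      _ = ‖A + t • X‖ + (k - t) * ‖X‖ := by
          rw [norm_smul, Real.norm_eq_abs, abs_of_nonneg (by linarith)]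
  nlinarith [norm_nonneg X]
end

section
/- Let dim H = 2 and let S be an invertible self-adjoint operator on H with eigenvalues λ, μ satisfying |λ/μ + μ/λ + k| ≥ k + 2 for some k ≥ 0. Then ‖S X S⁻¹ + S⁻¹ X S + kX‖ ≥ (k+2)‖X‖ for every operator X on H. -/
/-!
Let `u` be the symmetry equal to `1` on the `l`-eigenspace of `S` and to `-1` on the `m`-eigenspace,
so that `S = l P + m Q` with `P = (1 + u)/2`, `Q = (1 - u)/2`. Then
`S X S⁻¹ + S⁻¹ X S + k X = s X + t (u X u)` with `s + t = k + 2` and `s - t = l/m + m/l + k`.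
Conjugating by `u` swaps `s` and `t`, so `(s² - t²) X = s Y - t (u Y u)` for the left side `Y`,
whence `|s + t| |s - t| ‖X‖ ≤ (|s| + |t|) ‖Y‖`. The hypothesis says `|s + t| ≤ |s - t|`, i.e.
`s t ≤ 0`, which is exactly `|s| + |t| = |s - t|`.
-/

open ContinuousLinearMap

variable {H : Type*} [NormedAddCommGroup H] [InnerProductSpace ℂ H] [CompleteSpace H]

theorem norm_add_mul_norm_le_norm_smul_add_smul_conj {𝕜 E : Type*} [NormedField 𝕜]
    [NormedRing E] [StarRing E] [CStarRing E] [NormedAlgebra 𝕜 E]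
    {u : E} (hu : u ∈ unitary E) (hu2 : u * u = 1) {s t : 𝕜} (hst : ‖s‖ + ‖t‖ ≤ ‖s - t‖)
    (X : E) : ‖s + t‖ * ‖X‖ ≤ ‖s • X + t • (u * X * u)‖ := by
  set Y := s • X + t • (u * X * u)
  have hconj : ‖u * Y * u‖ = ‖Y‖ := by
    rw [CStarRing.norm_mul_mem_unitary _ hu, CStarRing.norm_mem_unitary_mul _ hu]
  have hsolve : (s ^ 2 - t ^ 2) • X = s • Y - t • (u * Y * u) := by
    have huXu : u * (u * X * u) * u = X := by
      rw [← mul_assoc, ← mul_assoc, hu2, one_mul, mul_assoc, hu2, mul_one]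
    simp only [Y, mul_add, add_mul, mul_smul_comm, smul_mul_assoc, huXu, smul_add, smul_smul]
    match_scalars <;> ring
  have hkey : ‖s - t‖ * (‖s + t‖ * ‖X‖) ≤ ‖s - t‖ * ‖Y‖ := calc
    ‖s - t‖ * (‖s + t‖ * ‖X‖) = ‖s • Y - t • (u * Y * u)‖ := by
      rw [← hsolve, norm_smul, sq_sub_sq, norm_mul]; ring
    _ ≤ ‖s‖ * ‖Y‖ + ‖t‖ * ‖Y‖ := by
      grw [norm_sub_le, norm_smul, norm_smul, hconj]
    _ ≤ ‖s - t‖ * ‖Y‖ := by rw [← add_mul]; gcongr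
  rcases (norm_nonneg (s - t)).eq_or_lt with hzero | hpos
  · have hs : s = 0 := norm_eq_zero.mp (by linarith [norm_nonneg s, norm_nonneg t])
    have ht : t = 0 := norm_eq_zero.mp (by linarith [norm_nonneg s, norm_nonneg t])
    simp [hs, ht]
  · exact le_of_mul_le_mul_left hkey hpos

section Symmetry

variable {𝕜 E : Type*} [Field 𝕜] [Ring E] [Algebra 𝕜 E]

-- `l` on the `+1`-eigenspace of the symmetry `u` and `m` on its `-1`-eigenspace.
def symmetryComb (u : E) (l m : 𝕜) : E := ((l + m) / 2) • 1 + ((l - m) / 2) • u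

theorem symmetryComb_mul_symmetryComb [CharZero 𝕜] {u : E} (hu : u * u = 1) (l m l' m' : 𝕜) :
    symmetryComb u l m * symmetryComb u l' m' = symmetryComb u (l * l') (m * m') := by
  simp only [symmetryComb, mul_add, add_mul, smul_mul_assoc, mul_smul_comm, one_mul, mul_one, hu]
  match_scalars <;> ring

theorem symmetryComb_one_one [CharZero 𝕜] (u : E) : symmetryComb u (1 : 𝕜) 1 = 1 := by
  simp [symmetryComb]

theorem symmetryComb_mul_symmetryComb_inv [CharZero 𝕜] {u : E} (hu : u * u = 1) {l m : 𝕜}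
    (hl : l ≠ 0) (hm : m ≠ 0) : symmetryComb u l m * symmetryComb u l⁻¹ m⁻¹ = 1 := by
  rw [symmetryComb_mul_symmetryComb hu, mul_inv_cancel₀ hl, mul_inv_cancel₀ hm,
    symmetryComb_one_one]

theorem symmetryComb_conj_add_conj_inv [CharZero 𝕜] (u X : E) {l m : 𝕜} (hl : l ≠ 0) (hm : m ≠ 0) :
    symmetryComb u l m * X * symmetryComb u l⁻¹ m⁻¹ +
        symmetryComb u l⁻¹ m⁻¹ * X * symmetryComb u l m =
      ((l / m + m / l + 2) / 2) • X - ((l / m + m / l - 2) / 2) • (u * X * u) := by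
  simp only [symmetryComb, mul_add, add_mul, smul_mul_assoc, mul_smul_comm, one_mul, mul_one]
  match_scalars <;> field_simp <;> ring

end Symmetry

theorem IsStarNormal.exists_eq_symmetryComb_of_spectrum_subset {A : Type*} [CStarAlgebra A]
    {a : A} [IsStarNormal a] {l m : ℂ} (h : spectrum ℂ a ⊆ {l, m}) :
    ∃ u ∈ unitary A, u * u = 1 ∧ a = symmetryComb u l m := by
  set f : ℂ → ℂ := fun z => if z = l then 1 else -1
  have hf : ContinuousOn f (spectrum ℂ a) := ((Set.toFinite _).subset h).continuousOn f
  refine ⟨cfc f a, (cfc_unitary_iff f a).2 fun x _ => ?_, ?_, ?_⟩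
  · by_cases hx : x = l <;> simp [f, hx]
  · rw [← cfc_mul f f a, ← cfc_one ℂ a]
    refine cfc_congr fun x _ => ?_
    by_cases hx : x = l <;> simp [f, hx]
  · rw [symmetryComb, ← cfc_const_mul _ f a, ← Algebra.algebraMap_eq_smul_one,
      ← cfc_const_add _ _ a]
    conv_lhs => rw [← cfc_id' ℂ a]
    refine cfc_congr fun x hx => ?_
    by_cases hxl : x = l
    · simp only [f, hxl, if_true]; ring
    · obtain rfl : x = m := by simpa [hxl] using h hx
      simp only [f, hxl, if_false]; ring

theorem abs_add_abs_le_abs_sub_of_abs_add_le {s t : ℝ} (h : |s + t| ≤ |s - t|) :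
    |s| + |t| ≤ |s - t| := by
  rcases abs_cases s with ⟨_, _⟩ | ⟨_, _⟩ <;> rcases abs_cases t with ⟨_, _⟩ | ⟨_, _⟩ <;>
    rcases abs_cases (s + t) with ⟨_, _⟩ | ⟨_, _⟩ <;>
    rcases abs_cases (s - t) with ⟨_, _⟩ | ⟨_, _⟩ <;> linarith

theorem stmt13_general (S : (H →L[ℂ] H)ˣ) (hS : IsSelfAdjoint (S : H →L[ℂ] H))
    (l m : ℂ) (hspec : spectrum ℂ (S : H →L[ℂ] H) = {l, m})
    (k : ℝ) (hk : 0 ≤ k) (hlm : k + 2 ≤ ‖l / m + m / l + k‖) :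
    ∀ X : H →L[ℂ] H,
      (k + 2) * ‖X‖ ≤ ‖(S : H →L[ℂ] H) * X * (↑S⁻¹ : H →L[ℂ] H) +
        (↑S⁻¹ : H →L[ℂ] H) * X * (S : H →L[ℂ] H) + k • X‖ := by
  intro X
  have hmem : l ∈ spectrum ℂ (S : H →L[ℂ] H) ∧ m ∈ spectrum ℂ (S : H →L[ℂ] H) := by simp [hspec]
  obtain ⟨x, rfl⟩ : ∃ x : ℝ, (x : ℂ) = l := ⟨_, (hS.mem_spectrum_eq_re hmem.1).symm⟩
  obtain ⟨y, rfl⟩ : ∃ y : ℝ, (y : ℂ) = m := ⟨_, (hS.mem_spectrum_eq_re hmem.2).symm⟩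
  have hx : (x : ℂ) ≠ 0 := fun h => spectrum.zero_notMem ℂ S.isUnit (h ▸ hmem.1)
  have hy : (y : ℂ) ≠ 0 := fun h => spectrum.zero_notMem ℂ S.isUnit (h ▸ hmem.2)
  have hSnormal : IsStarNormal (S : H →L[ℂ] H) := hS.isStarNormal
  obtain ⟨u, hu, hu2, hSu⟩ := IsStarNormal.exists_eq_symmetryComb_of_spectrum_subset hspec.subset
  have hinv : (↑S⁻¹ : H →L[ℂ] H) = symmetryComb u (x : ℂ)⁻¹ (y : ℂ)⁻¹ :=
    Units.inv_eq_of_mul_eq_one_right (hSu ▸ symmetryComb_mul_symmetryComb_inv hu2 hx hy)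
  set s : ℝ := (x / y + y / x + 2) / 2 + k
  set t : ℝ := (2 - x / y - y / x) / 2
  have hY : (S : H →L[ℂ] H) * X * (↑S⁻¹ : H →L[ℂ] H) +
      (↑S⁻¹ : H →L[ℂ] H) * X * (S : H →L[ℂ] H) + k • X = (s : ℂ) • X + (t : ℂ) • (u * X * u) := by
    rw [hinv, hSu, symmetryComb_conj_add_conj_inv u X hx hy, ← Complex.coe_smul]
    match_scalars <;> push_cast [s, t] <;> ring
  have hdiff : k + 2 ≤ |s - t| := by
    rw [← Real.norm_eq_abs, ← Complex.norm_real]; push_cast [s, t]; convert hlm using 2; ring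
  have hsum : s + t = k + 2 := by ring
  calc (k + 2) * ‖X‖ = ‖(s : ℂ) + t‖ * ‖X‖ := by
        rw [← Complex.ofReal_add, hsum, Complex.norm_real, Real.norm_of_nonneg (by positivity)]
    _ ≤ _ := by
      refine hY ▸ norm_add_mul_norm_le_norm_smul_add_smul_conj hu hu2 ?_ X
      simp only [← Complex.ofReal_sub, Complex.norm_real, Real.norm_eq_abs]
      exact abs_add_abs_le_abs_sub_of_abs_add_le (by rwa [hsum, abs_of_nonneg (by positivity)])

theorem stmt13 [FiniteDimensional ℂ H] (hdim : Module.finrank ℂ H = 2)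
    (S : (H →L[ℂ] H)ˣ) (hS : IsSelfAdjoint (S : H →L[ℂ] H))
    (l m : ℂ) (hspec : spectrum ℂ (S : H →L[ℂ] H) = {l, m})
    (k : ℝ) (hk : 0 ≤ k) (hlm : k + 2 ≤ ‖l / m + m / l + k‖) :
    ∀ X : H →L[ℂ] H,
      (k + 2) * ‖X‖ ≤ ‖(S : H →L[ℂ] H) * X * (↑S⁻¹ : H →L[ℂ] H) +
        (↑S⁻¹ : H →L[ℂ] H) * X * (S : H →L[ℂ] H) + k • X‖ :=
  stmt13_general S hS l m hspec k hk hlm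
end

section
/- For an invertible bounded operator S on a complex Hilbert space and a bounded operator X, max{‖S X S⁻¹ + S*⁻¹ X S*‖, ‖S* X S*⁻¹ + S⁻¹ X S‖} ≥ 2‖X‖. -/
/-!
Put `T = S⋆S`. Conjugating `A = S X S⁻¹ + S⋆⁻¹ X S⋆` by `S` gives the Sylvester equation
`S⋆ A S = T X + X T`, whose solution is `X = ∫₀^∞ e^{-tT} S⋆ A S e^{-tT} dt`. Hence
`⟪X u, v⟫ = ∫₀^∞ ⟪A S e^{-tT} u, S e^{-tT} v⟫ dt`, which by AM-GM has modulus at most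
`‖A‖/2 ∫₀^∞ (‖S e^{-tT} u‖² + ‖S e^{-tT} v‖²) dt`. As `d/dt ‖e^{-tT} u‖² = -2 ‖S e^{-tT} u‖²`
and `e^{-tT} u → 0` (because `S` is bounded below), `∫₀^∞ ‖S e^{-tT} u‖² dt = ‖u‖²/2`, so
`|⟪X u, v⟫| ≤ ‖A‖/2` for unit vectors `u`, `v`.
-/

open NormedSpace Filter Topology MeasureTheory
open scoped InnerProductSpace

theorem hasDerivAt_exp_smul_neg_apply {E : Type*} [NormedAddCommGroup E] [NormedSpace ℂ E]
    [CompleteSpace E] (T : E →L[ℂ] E) (w : E) (t : ℝ) :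
    HasDerivAt (fun t : ℝ => exp (t • -T) w) (-T (exp (t • -T) w)) t := by
  have h := ((ContinuousLinearMap.apply ℂ E w).restrictScalars ℝ).hasFDerivAt.comp_hasDerivAt t
    (hasDerivAt_exp_smul_const' (-T) t)
  simpa [Function.comp_def] using h

theorem norm_inner_apply_le_half_mul_sq_add_sq {H : Type*} [NormedAddCommGroup H]
    [InnerProductSpace ℂ H] (A : H →L[ℂ] H) (x y : H) :
    ‖⟪A x, y⟫_ℂ‖ ≤ ‖A‖ / 2 * (‖x‖ ^ 2 + ‖y‖ ^ 2) := by
  calc ‖⟪A x, y⟫_ℂ‖ ≤ ‖A‖ * ‖x‖ * ‖y‖ :=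
        (norm_inner_le_norm _ _).trans (by gcongr; exact A.le_opNorm x)
    _ ≤ ‖A‖ / 2 * (‖x‖ ^ 2 + ‖y‖ ^ 2) := by
        nlinarith [mul_nonneg (norm_nonneg A) (sq_nonneg (‖x‖ - ‖y‖))]

open ContinuousLinearMap

variable {H : Type*} [NormedAddCommGroup H] [InnerProductSpace ℂ H] [CompleteSpace H]

theorem inner_star_mul_self_apply_left (s : H →L[ℂ] H) (x y : H) :
    ⟪(star s * s) x, y⟫_ℂ = ⟪s x, s y⟫_ℂ := by
  rw [star_eq_adjoint]
  exact adjoint_inner_left s y (s x)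

theorem inner_star_mul_self_apply_right (s : H →L[ℂ] H) (x y : H) :
    ⟪x, (star s * s) y⟫_ℂ = ⟪s x, s y⟫_ℂ := by
  rw [star_eq_adjoint]
  exact adjoint_inner_right s x (s y)

noncomputable def gramFlow (s : H →L[ℂ] H) (t : ℝ) : H →L[ℂ] H := exp (t • -(star s * s))

section GramFlow

variable (s : H →L[ℂ] H)

@[simp] theorem gramFlow_zero : gramFlow s 0 = 1 := by simp [gramFlow]

theorem hasDerivAt_gramFlow_apply (u : H) (t : ℝ) :
    HasDerivAt (fun t => gramFlow s t u) (-(star s * s) (gramFlow s t u)) t :=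
  hasDerivAt_exp_smul_neg_apply _ u t

theorem continuous_gramFlow_apply (u : H) : Continuous fun t => gramFlow s t u :=
  continuous_iff_continuousAt.mpr fun t => (hasDerivAt_gramFlow_apply s u t).continuousAt

theorem continuous_norm_sq_apply_gramFlow (u : H) :
    Continuous fun t => ‖s (gramFlow s t u)‖ ^ 2 :=
  (s.continuous.comp (continuous_gramFlow_apply s u)).norm.pow 2

theorem hasDerivAt_norm_sq_gramFlow_apply (u : H) (t : ℝ) :
    HasDerivAt (fun t => ‖gramFlow s t u‖ ^ 2) (-(2 * ‖s (gramFlow s t u)‖ ^ 2)) t := by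
  -- `HasDerivAt.norm_sq` needs the underlying real inner product space.
  let _ := InnerProductSpace.rclikeToReal ℂ H
  convert (hasDerivAt_gramFlow_apply s u t).norm_sq using 1
  rw [real_inner_eq_re_inner ℂ, inner_neg_right, inner_star_mul_self_apply_right,
    inner_self_eq_norm_sq_to_K]
  norm_cast
  ring

theorem two_mul_integral_norm_sq_apply_gramFlow (u : H) (N : ℝ) :
    2 * ∫ t in 0..N, ‖s (gramFlow s t u)‖ ^ 2 = ‖u‖ ^ 2 - ‖gramFlow s N u‖ ^ 2 := by
  have := intervalIntegral.integral_eq_sub_of_hasDerivAt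
    (fun t _ => hasDerivAt_norm_sq_gramFlow_apply s u t)
    (((continuous_norm_sq_apply_gramFlow s u).const_mul 2).neg.intervalIntegrable 0 N)
  rw [intervalIntegral.integral_neg, intervalIntegral.integral_const_mul] at this
  simp only [gramFlow_zero, one_apply_eq_self] at this
  linarith

theorem antitone_norm_sq_gramFlow_apply (u : H) : Antitone fun t => ‖gramFlow s t u‖ ^ 2 :=
  antitone_of_hasDerivAt_nonpos (hasDerivAt_norm_sq_gramFlow_apply s u)
    fun t => by simp only [Pi.zero_apply]; nlinarith [sq_nonneg ‖s (gramFlow s t u)‖]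

variable {s}

theorem mul_norm_sq_gramFlow_apply_le {K : ℝ} (hs : ∀ y, ‖y‖ ≤ K * ‖s y‖) (u : H) {N : ℝ}
    (hN : 0 ≤ N) : 2 * N * ‖gramFlow s N u‖ ^ 2 ≤ K ^ 2 * ‖u‖ ^ 2 := by
  have hle : ∀ t ∈ Set.Icc 0 N, ‖gramFlow s N u‖ ^ 2 ≤ K ^ 2 * ‖s (gramFlow s t u)‖ ^ 2 :=
    fun t ht => calc
      ‖gramFlow s N u‖ ^ 2 ≤ ‖gramFlow s t u‖ ^ 2 := antitone_norm_sq_gramFlow_apply s u ht.2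
      _ ≤ (K * ‖s (gramFlow s t u)‖) ^ 2 := by gcongr; exact hs _
      _ = K ^ 2 * ‖s (gramFlow s t u)‖ ^ 2 := by ring
  have hint : ∫ _ in 0..N, ‖gramFlow s N u‖ ^ 2
      ≤ ∫ t in 0..N, K ^ 2 * ‖s (gramFlow s t u)‖ ^ 2 :=
    intervalIntegral.integral_mono_on hN intervalIntegrable_const
      (((continuous_norm_sq_apply_gramFlow s u).const_mul _).intervalIntegrable 0 N) hle
  rw [intervalIntegral.integral_const, intervalIntegral.integral_const_mul, smul_eq_mul] at hint
  have := two_mul_integral_norm_sq_apply_gramFlow s u N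
  nlinarith [sq_nonneg K, sq_nonneg ‖gramFlow s N u‖]

theorem tendsto_gramFlow_apply_atTop {K : ℝ} (hs : ∀ y, ‖y‖ ≤ K * ‖s y‖) (u : H) :
    Tendsto (fun t => gramFlow s t u) atTop (𝓝 0) := by
  have hsq : Tendsto (fun t => ‖gramFlow s t u‖ ^ 2) atTop (𝓝 0) := by
    have hlim : Tendsto (fun t : ℝ => K ^ 2 * ‖u‖ ^ 2 / 2 / t) atTop (𝓝 0) :=
      tendsto_const_nhds.div_atTop tendsto_id
    refine squeeze_zero' (Eventually.of_forall fun t => by positivity) ?_ hlim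
    filter_upwards [eventually_gt_atTop 0] with t ht
    rw [le_div_iff₀ ht]
    nlinarith [mul_norm_sq_gramFlow_apply_le hs u ht.le]
  rw [tendsto_zero_iff_norm_tendsto_zero]
  simpa [Real.sqrt_sq (norm_nonneg _)] using hsq.sqrt

variable {A X : H →L[ℂ] H}

theorem hasDerivAt_inner_gramFlow_apply
    (h : star s * A * s = star s * s * X + X * (star s * s)) (u v : H) (t : ℝ) :
    HasDerivAt (fun t => ⟪X (gramFlow s t u), gramFlow s t v⟫_ℂ)
      (-⟪A (s (gramFlow s t u)), s (gramFlow s t v)⟫_ℂ) t := by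
  have hX :=
    (X.restrictScalars ℝ).hasFDerivAt.comp_hasDerivAt t (hasDerivAt_gramFlow_apply s u t)
  refine (hX.inner ℂ (hasDerivAt_gramFlow_apply s v t)).congr_deriv ?_
  have hA : ⟪A (s (gramFlow s t u)), s (gramFlow s t v)⟫_ℂ
      = ⟪(star s * A * s) (gramFlow s t u), gramFlow s t v⟫_ℂ := by
    rw [star_eq_adjoint]
    exact (adjoint_inner_left s _ _).symm
  rw [hA, h, add_apply, inner_add_left, map_neg, inner_neg_right, inner_neg_left]
  simp only [coe_restrictScalars', Function.comp_apply]
  rw [inner_star_mul_self_apply_right, ← inner_star_mul_self_apply_left, neg_add]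
  rfl

theorem inner_sub_inner_gramFlow_eq_integral
    (h : star s * A * s = star s * s * X + X * (star s * s)) (u v : H) (N : ℝ) :
    ⟪X u, v⟫_ℂ - ⟪X (gramFlow s N u), gramFlow s N v⟫_ℂ
      = ∫ t in 0..N, ⟪A (s (gramFlow s t u)), s (gramFlow s t v)⟫_ℂ := by
  have hcont : Continuous fun t => -⟪A (s (gramFlow s t u)), s (gramFlow s t v)⟫_ℂ := by
    have := continuous_gramFlow_apply s u
    have := continuous_gramFlow_apply s v
    fun_prop
  have := intervalIntegral.integral_eq_sub_of_hasDerivAt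
    (fun t _ => hasDerivAt_inner_gramFlow_apply h u v t) (hcont.intervalIntegrable 0 N)
  rw [intervalIntegral.integral_neg, gramFlow_zero] at this
  simp only [one_apply_eq_self] at this
  linear_combination this

theorem norm_integral_inner_gramFlow_le (A : H →L[ℂ] H) (u v : H) {N : ℝ} (hN : 0 ≤ N) :
    ‖∫ t in 0..N, ⟪A (s (gramFlow s t u)), s (gramFlow s t v)⟫_ℂ‖
      ≤ ‖A‖ / 4 * (‖u‖ ^ 2 + ‖v‖ ^ 2) := by
  have hu := (continuous_norm_sq_apply_gramFlow s u).intervalIntegrable (μ := volume) 0 N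
  have hv := (continuous_norm_sq_apply_gramFlow s v).intervalIntegrable (μ := volume) 0 N
  calc ‖∫ t in 0..N, ⟪A (s (gramFlow s t u)), s (gramFlow s t v)⟫_ℂ‖
        ≤ ∫ t in 0..N, ‖A‖ / 2 * (‖s (gramFlow s t u)‖ ^ 2 + ‖s (gramFlow s t v)‖ ^ 2) :=
        intervalIntegral.norm_integral_le_of_norm_le hN
          (Eventually.of_forall fun _ _ => norm_inner_apply_le_half_mul_sq_add_sq A _ _)
          ((hu.add hv).const_mul _)
    _ = ‖A‖ / 4 * (2 * ∫ t in 0..N, ‖s (gramFlow s t u)‖ ^ 2)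
          + ‖A‖ / 4 * (2 * ∫ t in 0..N, ‖s (gramFlow s t v)‖ ^ 2) := by
        rw [intervalIntegral.integral_const_mul, intervalIntegral.integral_add hu hv]
        ring
    _ ≤ ‖A‖ / 4 * ‖u‖ ^ 2 + ‖A‖ / 4 * ‖v‖ ^ 2 := by
        rw [two_mul_integral_norm_sq_apply_gramFlow, two_mul_integral_norm_sq_apply_gramFlow]
        gcongr <;> exact sub_le_self _ (sq_nonneg _)
    _ = ‖A‖ / 4 * (‖u‖ ^ 2 + ‖v‖ ^ 2) := by ring

theorem norm_inner_le_of_star_mul_mul_eq {K : ℝ} (hs : ∀ y, ‖y‖ ≤ K * ‖s y‖)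
    (h : star s * A * s = star s * s * X + X * (star s * s)) (u v : H) :
    ‖⟪X u, v⟫_ℂ‖ ≤ ‖A‖ / 4 * (‖u‖ ^ 2 + ‖v‖ ^ 2) := by
  have hlim : Tendsto (fun N => ⟪X u, v⟫_ℂ - ⟪X (gramFlow s N u), gramFlow s N v⟫_ℂ) atTop
      (𝓝 ⟪X u, v⟫_ℂ) := by
    have h0 : Tendsto (fun N => ⟪X (gramFlow s N u), gramFlow s N v⟫_ℂ) atTop (𝓝 ⟪X 0, 0⟫_ℂ) :=
      ((X.continuous.tendsto 0).comp (tendsto_gramFlow_apply_atTop hs u)).inner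
        (tendsto_gramFlow_apply_atTop hs v)
    simpa using tendsto_const_nhds.sub h0
  refine le_of_tendsto hlim.norm ?_
  filter_upwards [eventually_ge_atTop 0] with N hN
  rw [inner_sub_inner_gramFlow_eq_integral h]
  exact norm_integral_inner_gramFlow_le A u v hN

theorem two_mul_norm_le_of_star_mul_mul_eq {K : ℝ} (hs : ∀ y, ‖y‖ ≤ K * ‖s y‖)
    (h : star s * A * s = star s * s * X + X * (star s * s)) : 2 * ‖X‖ ≤ ‖A‖ := by
  suffices ‖X‖ ≤ ‖A‖ / 2 by linarith
  refine X.opNorm_le_of_re_inner_le (by positivity) fun x y hx hy => ?_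
  calc RCLike.re ⟪X x, y⟫_ℂ ≤ ‖⟪X x, y⟫_ℂ‖ := RCLike.re_le_norm _
    _ ≤ ‖A‖ / 4 * (‖x‖ ^ 2 + ‖y‖ ^ 2) := norm_inner_le_of_star_mul_mul_eq hs h x y
    _ = ‖A‖ / 2 := by rw [hx, hy]; ring

end GramFlow

theorem stmt15 (S : (H →L[ℂ] H)ˣ) (X : H →L[ℂ] H) :
    2 * ‖X‖ ≤ max
      ‖(S : H →L[ℂ] H) * X * (↑S⁻¹ : H →L[ℂ] H) +
        adjoint (↑S⁻¹ : H →L[ℂ] H) * X * adjoint (S : H →L[ℂ] H)‖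
      ‖adjoint (S : H →L[ℂ] H) * X * adjoint (↑S⁻¹ : H →L[ℂ] H) +
        (↑S⁻¹ : H →L[ℂ] H) * X * (S : H →L[ℂ] H)‖ := by
  refine le_max_of_le_left (two_mul_norm_le_of_star_mul_mul_eq (s := S)
    (K := ‖(↑S⁻¹ : H →L[ℂ] H)‖) (fun y => ?_) ?_)
  · calc ‖y‖ = ‖(↑S⁻¹ : H →L[ℂ] H) ((S : H →L[ℂ] H) y)‖ := by
          rw [← mul_apply_eq_comp, Units.inv_mul, one_apply_eq_self]
    _ ≤ _ := le_opNorm _ _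
  · have h : star (S : H →L[ℂ] H) * star (↑S⁻¹ : H →L[ℂ] H) = 1 := by
      rw [← star_mul, Units.inv_mul, star_one]
    simp only [← star_eq_adjoint, mul_add, add_mul, mul_assoc, Units.inv_mul, mul_one]
    rw [← mul_assoc (star (S : H →L[ℂ] H)) (star (↑S⁻¹ : H →L[ℂ] H)), h, one_mul]
end

section
/- For an invertible bounded operator S on a complex Hilbert space and a bounded operator X, max{‖S X S*⁻¹ + S*⁻¹ X S‖, ‖S* X S⁻¹ + S⁻¹ X S*‖} ≥ 2‖X‖. -/
/-!
Write `S = U P` with `U` unitary and `P = |S|` positive and invertible; the second expression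
becomes `‖(P Y P⁻¹ + P⁻¹ Y P) U*‖` with `Y = U* X`, so it suffices to show
`2 ‖Y‖ ≤ ‖P Y P⁻¹ + P⁻¹ Y P‖`. With `C = cosh (log P)` and `D = sinh (log P)` we have
`P = C + D`, `P⁻¹ = C - D` and `P Y P⁻¹ + P⁻¹ Y P = 2 (C Y C - D Y D)`. Testing `C Y C - D Y D`
against `C⁻¹ v` and `C⁻¹ v'` and using `‖C z‖² = ‖z‖² + ‖D z‖²` bounds `|⟪v', Y v⟫|` by a
convex combination of `‖C Y C - D Y D‖` and `‖Y‖` whose weight on `‖Y‖` is at most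
`‖tanh (log P)‖² < 1`; taking the supremum over `v, v'` forces `‖Y‖ ≤ ‖C Y C - D Y D‖`.
-/

open ContinuousLinearMap
open scoped InnerProductSpace

lemma Real.mul_add_mul_le_mul_of_sq_add_sq_eq {a₁ b₁ r₁ a₂ b₂ r₂ : ℝ} (hr₁ : 0 ≤ r₁)
    (hr₂ : 0 ≤ r₂) (h₁ : a₁ ^ 2 + b₁ ^ 2 = r₁ ^ 2) (h₂ : a₂ ^ 2 + b₂ ^ 2 = r₂ ^ 2) :
    a₁ * a₂ + b₁ * b₂ ≤ r₁ * r₂ := by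
  nlinarith [sq_nonneg (a₁ * b₂ - a₂ * b₁), mul_nonneg hr₁ hr₂]

namespace ContinuousLinearMap

variable {𝕜 E : Type*} [RCLike 𝕜] [NormedAddCommGroup E] [InnerProductSpace 𝕜 E]

lemma opNorm_le_of_norm_inner_le (T : E →L[𝕜] E) {c : ℝ} (hc : 0 ≤ c)
    (h : ∀ x y, ‖⟪y, T x⟫_𝕜‖ ≤ c * ‖x‖ * ‖y‖) : ‖T‖ ≤ c := by
  refine T.opNorm_le_bound hc fun x => ?_
  have hx := h x (T x)
  rw [inner_self_eq_norm_sq_to_K, norm_pow, RCLike.norm_ofReal, abs_norm, sq] at hx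
  rcases (norm_nonneg (T x)).eq_or_lt with h0 | hpos
  · rw [← h0]; positivity
  · exact le_of_mul_le_mul_right (by linarith) hpos

variable [CompleteSpace E]

lemma norm_apply_sq_eq_add_of_star_mul_self_sub {C D : E →L[𝕜] E}
    (h : star C * C - star D * D = 1) (z : E) :
    ‖C z‖ ^ 2 = ‖z‖ ^ 2 + ‖D z‖ ^ 2 := by
  have key : (star C * C) z = z + (star D * D) z := by
    rw [sub_eq_iff_eq_add'] at h; rw [h]; simp [add_comm]
  rw [apply_norm_sq_eq_inner_adjoint_right, apply_norm_sq_eq_inner_adjoint_right,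
    ← star_eq_adjoint, ← star_eq_adjoint, ← inner_self_eq_norm_sq (𝕜 := 𝕜)]
  change RCLike.re ⟪z, (star C * C) z⟫_𝕜 = _ + RCLike.re ⟪z, (star D * D) z⟫_𝕜
  rw [key, inner_add_right, map_add]

lemma inner_star_mul_mul_sub_apply (C D Y : E →L[𝕜] E) (u w : E) :
    ⟪w, (star C * Y * C - star D * Y * D) u⟫_𝕜 = ⟪C w, Y (C u)⟫_𝕜 - ⟪D w, Y (D u)⟫_𝕜 := by
  simp [inner_sub_right, star_eq_adjoint, adjoint_inner_right]

lemma norm_le_norm_star_mul_mul_sub {C D N : E →L[𝕜] E} (hCN : C * N = 1)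
    (hCD : star C * C - star D * D = 1) (hDN : ‖D * N‖ < 1) (Y : E →L[𝕜] E) :
    ‖Y‖ ≤ ‖star C * Y * C - star D * Y * D‖ := by
  set Z := star C * Y * C - star D * Y * D
  set β := ‖D * N‖
  by_contra! hlt
  have bound : ∀ v v', ‖⟪v', Y v⟫_𝕜‖ ≤ (‖Z‖ + (‖Y‖ - ‖Z‖) * β ^ 2) * ‖v‖ * ‖v'‖ := by
    intro v v'
    have hC : ∀ x, C (N x) = x := fun x => by rw [← mul_apply_eq_comp, hCN, one_apply_eq_self]
    have hinner : ⟪v', Y v⟫_𝕜 = ⟪N v', Z (N v)⟫_𝕜 + ⟪D (N v'), Y (D (N v))⟫_𝕜 := by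
      rw [inner_star_mul_mul_sub_apply, hC, hC, sub_add_cancel]
    have hsplit :
        ‖⟪v', Y v⟫_𝕜‖ ≤ ‖Z‖ * (‖N v'‖ * ‖N v‖) + ‖Y‖ * (‖D (N v')‖ * ‖D (N v)‖) := by
      rw [hinner]
      refine (norm_add_le _ _).trans (add_le_add ?_ ?_)
      · calc _ ≤ ‖N v'‖ * ‖Z (N v)‖ := norm_inner_le_norm _ _
          _ ≤ ‖N v'‖ * (‖Z‖ * ‖N v‖) := by gcongr; exact Z.le_opNorm _
          _ = _ := by ring
      · calc _ ≤ ‖D (N v')‖ * ‖Y (D (N v))‖ := norm_inner_le_norm _ _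
          _ ≤ ‖D (N v')‖ * (‖Y‖ * ‖D (N v)‖) := by gcongr; exact Y.le_opNorm _
          _ = _ := by ring
    have hCS : ‖N v'‖ * ‖N v‖ + ‖D (N v')‖ * ‖D (N v)‖ ≤ ‖v'‖ * ‖v‖ :=
      Real.mul_add_mul_le_mul_of_sq_add_sq_eq (norm_nonneg _) (norm_nonneg _)
        (by rw [← norm_apply_sq_eq_add_of_star_mul_self_sub hCD, hC])
        (by rw [← norm_apply_sq_eq_add_of_star_mul_self_sub hCD, hC])
    have hD : ‖D (N v')‖ * ‖D (N v)‖ ≤ β ^ 2 * (‖v'‖ * ‖v‖) := by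
      rw [← mul_apply_eq_comp, ← mul_apply_eq_comp, sq, mul_mul_mul_comm]
      gcongr <;> exact (D * N).le_opNorm _
    nlinarith [mul_le_mul_of_nonneg_left hCS (norm_nonneg Z),
      mul_le_mul_of_nonneg_left hD (sub_nonneg.mpr hlt.le)]
  have hβ : 0 ≤ β := norm_nonneg _
  have hY := Y.opNorm_le_of_norm_inner_le (by positivity) bound
  nlinarith [mul_pos (sub_pos.mpr hlt) (by nlinarith : (0 : ℝ) < 1 - β ^ 2)]

end ContinuousLinearMap

section CStarRing

variable {A : Type*} [NormedRing A] [StarRing A] [CStarRing A]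

lemma norm_star_mul_mul_inv_add_of_eq_unitary_mul {U : A} (hU : U ∈ unitary A) {P s : Aˣ}
    (hP : IsSelfAdjoint (P : A)) (hs : (s : A) = U * P) (X : A) :
    ‖star (s : A) * X * ↑s⁻¹ + ↑s⁻¹ * X * star (s : A)‖ =
      ‖↑P * (star U * X) * ↑P⁻¹ + ↑P⁻¹ * (star U * X) * ↑P‖ := by
  have hinv : (↑s⁻¹ : A) = ↑P⁻¹ * star U := by
    refine (Units.eq_inv_of_mul_eq_one_left ?_).symm
    rw [hs, mul_assoc, Units.mul_inv_cancel_left, Unitary.mul_star_self_of_mem hU]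
  rw [hinv, hs, star_mul, hP.star_eq]
  conv_rhs => rw [← CStarRing.norm_mul_mem_unitary _ (Unitary.star_mem hU)]
  simp only [add_mul, mul_assoc]

end CStarRing

section CStarAlgebra

variable {A : Type*} [CStarAlgebra A] [PartialOrder A] [StarOrderedRing A]

lemma Units.exists_unitary_mul_nonneg (s : Aˣ) :
    ∃ U ∈ unitary A, ∃ P : Aˣ, 0 ≤ (P : A) ∧ (s : A) = U * P := by
  have hpos : IsStrictlyPositive (star (s : A) * s) :=
    (s.isUnit.star.mul s.isUnit).isStrictlyPositive (star_mul_self_nonneg _)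
  obtain ⟨P, hP⟩ := hpos.isUnit_cfcSqrt
  have hPP : (P : A) * P = star (s : A) * s := by rw [hP]; exact CFC.sqrt_mul_sqrt_self _
  have hPinv : star (↑P⁻¹ : A) = ↑P⁻¹ := by
    have hPsa : star P = P := Units.ext <| by
      rw [Units.coe_star, hP]; exact (CFC.sqrt_nonneg _).isSelfAdjoint.star_eq
    rw [← Units.coe_star_inv, hPsa]
  set U : Aˣ := s * P⁻¹
  have hUU : star (U : A) * U = 1 := by
    calc star (U : A) * U = ↑P⁻¹ * (star (s : A) * s) * ↑P⁻¹ := by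
          simp [U, star_mul, hPinv, mul_assoc]
      _ = 1 := by rw [← hPP]; simp
  have hUU' : (U : A) * star (U : A) = 1 := by
    rw [Units.eq_inv_of_mul_eq_one_right hUU, Units.mul_inv]
  exact ⟨U, Unitary.mem_iff.mpr ⟨hUU, hUU'⟩, P, hP ▸ CFC.sqrt_nonneg _, by simp [U]⟩

/-- `C = cosh (log P)`, `D = sinh (log P)` and `N = C⁻¹`, so that `D * N = tanh (log P)`. -/
lemma Units.exists_cosh_sinh_of_nonneg (P : Aˣ) (hP : 0 ≤ (P : A)) :
    ∃ C D N : A, IsSelfAdjoint C ∧ IsSelfAdjoint D ∧ C + D = P ∧ C - D = ↑P⁻¹ ∧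
      star C * C - star D * D = 1 ∧ C * N = 1 ∧ ‖D * N‖ < 1 := by
  have hσ : ∀ x ∈ spectrum ℝ (P : A), 0 < x :=
    (StarOrderedRing.isStrictlyPositive_iff_spectrum_pos _).mp (P.isStrictlyPositive_of_le hP)
  have hinv : ContinuousOn (fun x : ℝ => x⁻¹) (spectrum ℝ (P : A)) :=
    continuousOn_inv₀.mono fun x hx => (hσ x hx).ne'
  have hcosh : ContinuousOn (fun x : ℝ => (x + x⁻¹) / 2) (spectrum ℝ (P : A)) := by fun_prop
  have hsinh : ContinuousOn (fun x : ℝ => (x - x⁻¹) / 2) (spectrum ℝ (P : A)) := by fun_prop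
  have hsech : ContinuousOn (fun x : ℝ => 2 / (x + x⁻¹)) (spectrum ℝ (P : A)) :=
    continuousOn_const.div (continuousOn_id.add hinv) fun x hx => by
      have := hσ x hx; positivity
  refine ⟨cfc (fun x : ℝ => (x + x⁻¹) / 2) (P : A), cfc (fun x : ℝ => (x - x⁻¹) / 2) (P : A),
    cfc (fun x : ℝ => 2 / (x + x⁻¹)) (P : A), cfc_predicate _ _, cfc_predicate _ _,
    ?_, ?_, ?_, ?_, ?_⟩
  · rw [← cfc_add (hf := hcosh) (hg := hsinh)]
    conv_rhs => rw [← cfc_id' ℝ (P : A)]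
    exact cfc_congr fun x _ => by ring
  · rw [← cfc_sub (hf := hcosh) (hg := hsinh), ← cfc_inv_id (R := ℝ) P]
    exact cfc_congr fun x _ => by ring
  · rw [IsSelfAdjoint.star_eq (cfc_predicate _ _), IsSelfAdjoint.star_eq (cfc_predicate _ _),
      ← cfc_mul (hf := hcosh) (hg := hcosh), ← cfc_mul (hf := hsinh) (hg := hsinh),
      ← cfc_sub (hf := by fun_prop) (hg := by fun_prop), ← cfc_const_one ℝ (P : A)]
    refine cfc_congr fun x hx => ?_
    have := (hσ x hx).ne'
    field_simp
    ring
  · rw [← cfc_mul (hf := hcosh) (hg := hsech), ← cfc_const_one ℝ (P : A)]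
    refine cfc_congr fun x hx => ?_
    have := hσ x hx
    have : 0 < x + x⁻¹ := by positivity
    field_simp
  · rw [← cfc_mul (hf := hsinh) (hg := hsech)]
    refine norm_cfc_lt one_pos fun x hx => ?_
    have := hσ x hx
    have : 0 < x + x⁻¹ := by positivity
    rw [Real.norm_eq_abs, abs_lt]
    constructor
    · field_simp; nlinarith
    · field_simp; nlinarith

end CStarAlgebra

variable {H : Type*} [NormedAddCommGroup H] [InnerProductSpace ℂ H] [CompleteSpace H]

lemma two_mul_norm_le_norm_mul_mul_inv_add_s16 (P : (H →L[ℂ] H)ˣ) (hP : 0 ≤ (P : H →L[ℂ] H))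
    (Y : H →L[ℂ] H) : 2 * ‖Y‖ ≤ ‖↑P * Y * ↑P⁻¹ + ↑P⁻¹ * Y * ↑P‖ := by
  obtain ⟨C, D, N, hC, hD, hadd, hsub, hCD, hCN, hDN⟩ := P.exists_cosh_sinh_of_nonneg hP
  have hexpand : ↑P * Y * ↑P⁻¹ + ↑P⁻¹ * Y * ↑P =
      (2 : ℝ) • (star C * Y * C - star D * Y * D) := by
    rw [← hadd, ← hsub, hC.star_eq, hD.star_eq, two_smul]
    noncomm_ring
  rw [hexpand, norm_smul, Real.norm_two]
  gcongr
  exact norm_le_norm_star_mul_mul_sub hCN hCD hDN Y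

theorem stmt16 (S : (H →L[ℂ] H)ˣ) (X : H →L[ℂ] H) :
    2 * ‖X‖ ≤ max
      ‖(S : H →L[ℂ] H) * X * adjoint (↑S⁻¹ : H →L[ℂ] H) +
        adjoint (↑S⁻¹ : H →L[ℂ] H) * X * (S : H →L[ℂ] H)‖
      ‖adjoint (S : H →L[ℂ] H) * X * (↑S⁻¹ : H →L[ℂ] H) +
        (↑S⁻¹ : H →L[ℂ] H) * X * adjoint (S : H →L[ℂ] H)‖ := by
  obtain ⟨U, hU, P, hP, hS⟩ := S.exists_unitary_mul_nonneg
  refine le_max_of_le_right ?_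
  rw [← star_eq_adjoint, norm_star_mul_mul_inv_add_of_eq_unitary_mul hU hP.isSelfAdjoint hS,
    ← CStarRing.norm_mem_unitary_mul X (Unitary.star_mem hU)]
  exact two_mul_norm_le_norm_mul_mul_inv_add_s16 P hP _
end

section
/- For an invertible normal bounded operator S on a complex Hilbert space and any bounded operator X, ‖S X S⁻¹‖ + ‖S⁻¹ X S‖ ≥ 2‖X‖. -/
/-!
For an invertible normal `u` in a C⋆-algebra, taking adjoints shows that conjugating `y⋆` by `u`
has the same norm as conjugating `y` by `u⁻¹`. Hence `f y = ‖u y u⁻¹‖ ‖u⁻¹ y u‖` satisfies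
`f (y⋆ y) ≤ f y ^ 2`, while `‖y⋆ y‖ = ‖y‖ ^ 2`. Starting from the crude bound
`‖y‖ ^ 2 ≤ (‖u‖ ‖u⁻¹‖) ^ 2 f y` and iterating `y ↦ y⋆ y` gives
`(‖y‖ ^ 2) ^ 2 ^ n ≤ (‖u‖ ‖u⁻¹‖) ^ 2 (f y) ^ 2 ^ n`; taking `2 ^ n`-th roots, `‖y‖ ^ 2 ≤ f y`,
and AM-GM concludes.
-/

open ContinuousLinearMap Filter Topology

lemma le_of_forall_pow_two_pow_le_mul_pow {a b C : ℝ} (hb : 0 ≤ b)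
    (h : ∀ n : ℕ, a ^ 2 ^ n ≤ C * b ^ 2 ^ n) : a ≤ b := by
  by_contra! hba
  have ha : 0 < a := hb.trans_lt hba
  have hlim : Tendsto (fun n : ℕ ↦ C * (b / a) ^ 2 ^ n) atTop (𝓝 0) := by
    simpa using ((tendsto_pow_atTop_nhds_zero_of_lt_one (by positivity)
      ((div_lt_one ha).2 hba)).comp (tendsto_pow_atTop_atTop_of_one_lt one_lt_two)).const_mul C
  obtain ⟨n, hn⟩ := (hlim.eventually (gt_mem_nhds one_pos)).exists
  rw [div_pow, ← mul_div_assoc, div_lt_one (by positivity)] at hn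
  exact (h n).not_gt hn

section CStarRing

variable {A : Type*}

section NonUnital

variable [NonUnitalNormedRing A] [StarRing A] [CStarRing A]

lemma IsStarNormal.norm_star_mul {a : A} [ha : IsStarNormal a] (y : A) :
    ‖star a * y‖ = ‖a * y‖ := by
  have h : star (star a * y) * (star a * y) = star (a * y) * (a * y) := by
    simp only [star_mul, star_star, mul_assoc]
    rw [← mul_assoc a, ← ha.star_comm_self.eq, mul_assoc]
  rw [← mul_self_inj (norm_nonneg _) (norm_nonneg _), ← CStarRing.norm_star_mul_self,
    ← CStarRing.norm_star_mul_self, h]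

lemma IsStarNormal.norm_mul_star {a : A} [IsStarNormal a] (y : A) :
    ‖y * star a‖ = ‖y * a‖ := by
  rw [← norm_star, star_mul, star_star, ← IsStarNormal.norm_star_mul, ← star_mul, norm_star]

end NonUnital

section Units

variable [SeminormedRing A]

lemma norm_le_norm_inv_mul_norm_conj_mul_norm (u : Aˣ) (y : A) :
    ‖y‖ ≤ ‖(↑u⁻¹ : A)‖ * ‖(u : A) * y * ↑u⁻¹‖ * ‖(u : A)‖ :=
  calc ‖y‖ = ‖(↑u⁻¹ : A) * ((u : A) * y * ↑u⁻¹) * u‖ := by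
        simp only [mul_assoc, Units.inv_mul, mul_one, Units.inv_mul_cancel_left]
    _ ≤ _ := norm_mul₃_le

lemma sq_norm_le_sq_mul_norm_conj_mul_norm_conj_inv (u : Aˣ) (y : A) :
    ‖y‖ ^ 2 ≤ (‖(u : A)‖ * ‖(↑u⁻¹ : A)‖) ^ 2 *
      (‖(u : A) * y * ↑u⁻¹‖ * ‖(↑u⁻¹ : A) * y * u‖) := by
  have h₁ := norm_le_norm_inv_mul_norm_conj_mul_norm u y
  have h₂ := norm_le_norm_inv_mul_norm_conj_mul_norm u⁻¹ y
  rw [inv_inv] at h₂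
  calc ‖y‖ ^ 2 = ‖y‖ * ‖y‖ := sq _
    _ ≤ _ := mul_le_mul h₁ h₂ (norm_nonneg _) (by positivity)
    _ = _ := by ring

end Units

section CStarUnits

variable [NormedRing A] [StarRing A] [CStarRing A]

lemma norm_conj_star_eq_norm_conj_inv (u : Aˣ) [IsStarNormal (u : A)] (y : A) :
    ‖(u : A) * star y * ↑u⁻¹‖ = ‖(↑u⁻¹ : A) * y * u‖ := by
  rw [← norm_star, star_mul, star_mul, star_star, IsStarNormal.norm_star_mul, ← mul_assoc,
    IsStarNormal.norm_mul_star]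

lemma norm_conj_star_mul_self_le (u : Aˣ) [IsStarNormal (u : A)] (y : A) :
    ‖(u : A) * (star y * y) * ↑u⁻¹‖ ≤ ‖(↑u⁻¹ : A) * y * u‖ * ‖(u : A) * y * ↑u⁻¹‖ := by
  have h : (u : A) * (star y * y) * ↑u⁻¹ = ((u : A) * star y * ↑u⁻¹) * ((u : A) * y * ↑u⁻¹) := by
    simp only [mul_assoc, Units.inv_mul_cancel_left]
  rw [h, ← norm_conj_star_eq_norm_conj_inv]
  exact norm_mul_le _ _

lemma norm_conj_mul_norm_conj_inv_star_mul_self_le (u : Aˣ) [IsStarNormal (u : A)] (y : A) :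
    ‖(u : A) * (star y * y) * ↑u⁻¹‖ * ‖(↑u⁻¹ : A) * (star y * y) * u‖ ≤
      (‖(u : A) * y * ↑u⁻¹‖ * ‖(↑u⁻¹ : A) * y * u‖) ^ 2 := by
  have h₁ := norm_conj_star_mul_self_le u y
  have h₂ := norm_conj_star_mul_self_le u⁻¹ y
  rw [inv_inv] at h₂
  calc _ ≤ _ := mul_le_mul h₁ h₂ (norm_nonneg _) (by positivity)
    _ = _ := by ring

lemma sq_norm_pow_two_pow_le (u : Aˣ) [IsStarNormal (u : A)] (n : ℕ) (y : A) :
    (‖y‖ ^ 2) ^ 2 ^ n ≤ (‖(u : A)‖ * ‖(↑u⁻¹ : A)‖) ^ 2 *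
      (‖(u : A) * y * ↑u⁻¹‖ * ‖(↑u⁻¹ : A) * y * u‖) ^ 2 ^ n := by
  induction n generalizing y with
  | zero => simpa using sq_norm_le_sq_mul_norm_conj_mul_norm_conj_inv u y
  | succ n ih =>
    calc (‖y‖ ^ 2) ^ 2 ^ (n + 1) = (‖star y * y‖ ^ 2) ^ 2 ^ n := by
          rw [CStarRing.norm_star_mul_self]; ring
      _ ≤ _ := ih _
      _ ≤ (‖(u : A)‖ * ‖(↑u⁻¹ : A)‖) ^ 2 *
            ((‖(u : A) * y * ↑u⁻¹‖ * ‖(↑u⁻¹ : A) * y * u‖) ^ 2) ^ 2 ^ n := by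
          gcongr
          exact norm_conj_mul_norm_conj_inv_star_mul_self_le u y
      _ = _ := by rw [← pow_mul, ← pow_succ']

lemma sq_norm_le_norm_conj_mul_norm_conj_inv (u : Aˣ) [IsStarNormal (u : A)] (y : A) :
    ‖y‖ ^ 2 ≤ ‖(u : A) * y * ↑u⁻¹‖ * ‖(↑u⁻¹ : A) * y * u‖ :=
  le_of_forall_pow_two_pow_le_mul_pow (by positivity) (sq_norm_pow_two_pow_le u · y)

lemma two_mul_norm_le_norm_conj_add_norm_conj_inv (u : Aˣ) [IsStarNormal (u : A)] (y : A) :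
    2 * ‖y‖ ≤ ‖(u : A) * y * ↑u⁻¹‖ + ‖(↑u⁻¹ : A) * y * u‖ := by
  have := sq_norm_le_norm_conj_mul_norm_conj_inv u y
  nlinarith [sq_nonneg (‖(u : A) * y * ↑u⁻¹‖ - ‖(↑u⁻¹ : A) * y * u‖), norm_nonneg y,
    norm_nonneg ((u : A) * y * ↑u⁻¹), norm_nonneg ((↑u⁻¹ : A) * y * u)]

end CStarUnits

end CStarRing

variable {H : Type*} [NormedAddCommGroup H] [InnerProductSpace ℂ H] [CompleteSpace H]

theorem stmt17 (S : (H →L[ℂ] H)ˣ) (hS : IsStarNormal (S : H →L[ℂ] H)) (X : H →L[ℂ] H) :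
    2 * ‖X‖ ≤ ‖(S : H →L[ℂ] H) * X * (↑S⁻¹ : H →L[ℂ] H)‖ +
      ‖(↑S⁻¹ : H →L[ℂ] H) * X * (S : H →L[ℂ] H)‖ :=
  two_mul_norm_le_norm_conj_add_norm_conj_inv S X
end
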